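/- arXiv:math/0507472 — 3 statements merged into one kernel-verified Lean document; each statement's English description precedes it below -/
import Mathlib

section
/- Let S be a finite set of points in ℝ² of infinite order under T. Then there exists n ∈ ℕ such that Tⁿ(S) contains four points A, B, C, P with A, B, C not collinear and P lying in the interior of the triangle with vertices A, B, C (i.e., in the interior of the convex hull of {A, B, C}). -/
open Set Filter

noncomputable section

/-- The line through two points in the plane `ℝ × ℝ`. -/
def line (a b : ℝ × ℝ) : AffineSubspace ℝ (ℝ × ℝ) := affineSpan ℝ {a, b}

/-- The intersection operation `T`: the set of all intersection points of pairs of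
distinct lines through pairs of distinct points of `S`. -/
def interT (S : Set (ℝ × ℝ)) : Set (ℝ × ℝ) :=
  {x | ∃ a ∈ S, ∃ b ∈ S, ∃ c ∈ S, ∃ d ∈ S,
    a ≠ b ∧ c ≠ d ∧ line a b ≠ line c d ∧ x ∈ line a b ∧ x ∈ line c d}

namespace TrianglePf

def det3 (a b c : ℝ × ℝ) : ℝ := (b.1-a.1)*(c.2-a.2)-(b.2-a.2)*(c.1-a.1)

lemma det3_cyc (a b c : ℝ × ℝ) : det3 b c a = det3 a b c := by simp only [det3]; ring

lemma det3_swap (a b c : ℝ × ℝ) : det3 a c b = -det3 a b c := by simp only [det3]; ring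

lemma det3_sum (a b c p : ℝ × ℝ) :
    det3 b c p + det3 c a p + det3 a b p = det3 a b c := by simp only [det3]; ring

lemma ne12_of_det3 {a b c : ℝ × ℝ} (h : det3 a b c ≠ 0) : a ≠ b := by
  rintro rfl; exact h (by simp only [det3]; ring)

lemma ne13_of_det3 {a b c : ℝ × ℝ} (h : det3 a b c ≠ 0) : a ≠ c := by
  rintro rfl; exact h (by simp only [det3]; ring)

lemma ne23_of_det3 {a b c : ℝ × ℝ} (h : det3 a b c ≠ 0) : b ≠ c := by
  rintro rfl; exact h (by simp only [det3]; ring)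

lemma mem_line_iff {a b x : ℝ × ℝ} : x ∈ line a b ↔ ∃ t : ℝ, x - a = t • (b - a) := by
  constructor
  · intro h
    have h' : (x - a) +ᵥ a ∈ line a b := by simpa [vadd_eq_add, sub_add_cancel] using h
    rcases (vadd_left_mem_affineSpan_pair (k := ℝ)).1 h' with ⟨r, hr⟩
    exact ⟨r, by rw [← hr]; simp [vsub_eq_sub]⟩
  · rintro ⟨t, ht⟩
    have : (x - a) +ᵥ a ∈ line a b :=
      (vadd_left_mem_affineSpan_pair (k := ℝ)).2 ⟨t, by rw [ht]; simp [vsub_eq_sub]⟩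
    simpa [vadd_eq_add, sub_add_cancel] using this

lemma det3_eq_zero_of_mem {a b x : ℝ × ℝ} (h : x ∈ line a b) : det3 a b x = 0 := by
  rcases mem_line_iff.1 h with ⟨t, ht⟩
  have h1 : x.1 - a.1 = t * (b.1 - a.1) := congrArg Prod.fst ht
  have h2 : x.2 - a.2 = t * (b.2 - a.2) := congrArg Prod.snd ht
  simp only [det3]
  linear_combination (b.1 - a.1) * h2 - (b.2 - a.2) * h1

lemma mem_of_det3 {a b x : ℝ × ℝ} (hab : a ≠ b) (h : det3 a b x = 0) : x ∈ line a b := by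
  have hab' : b.1 - a.1 ≠ 0 ∨ b.2 - a.2 ≠ 0 := by
    by_contra hc
    push_neg at hc
    exact hab (Prod.ext (by linarith [hc.1]) (by linarith [hc.2])).symm
  rcases hab' with h1 | h2
  · refine mem_line_iff.2 ⟨(x.1 - a.1) / (b.1 - a.1), Prod.ext ?_ ?_⟩
    · simp only [Prod.smul_fst, Prod.fst_sub, smul_eq_mul]; field_simp
    · simp only [Prod.smul_snd, Prod.snd_sub, smul_eq_mul]
      rw [div_mul_eq_mul_div, eq_div_iff h1]
      simp only [det3] at h
      linear_combination h
  · refine mem_line_iff.2 ⟨(x.2 - a.2) / (b.2 - a.2), Prod.ext ?_ ?_⟩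
    · simp only [Prod.smul_fst, Prod.fst_sub, smul_eq_mul]
      rw [div_mul_eq_mul_div, eq_div_iff h2]
      simp only [det3] at h
      linear_combination -h
    · simp only [Prod.smul_snd, Prod.snd_sub, smul_eq_mul]; field_simp

lemma line_eq_of_mem {a b q r : ℝ × ℝ} (hab : a ≠ b) (hqr : q ≠ r)
    (hq : q ∈ line a b) (hr : r ∈ line a b) : line q r = line a b := by
  rcases mem_line_iff.1 hq with ⟨s, hs⟩
  rcases mem_line_iff.1 hr with ⟨t, ht⟩
  have hd : q - r = (t - s) • (a - b) := by
    have h' : q - r = (q - a) - (r - a) := by abel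
    rw [h', hs, ht]
    module
  have hts : t - s ≠ 0 := by
    intro h0
    apply hqr
    rw [h0, zero_smul, sub_eq_zero] at hd
    exact hd
  apply AffineSubspace.ext_of_direction_eq
  · show (line q r).direction = (line a b).direction
    unfold line
    rw [direction_affineSpan, direction_affineSpan, vectorSpan_pair, vectorSpan_pair]
    have : (q -ᵥ r : ℝ × ℝ) = (t - s) • (a -ᵥ b) := hd
    rw [this]
    exact Submodule.span_singleton_smul_eq (isUnit_iff_ne_zero.2 hts) _
  · exact ⟨q, left_mem_affineSpan_pair ℝ q r, hq⟩

lemma eq_of_det3 {x y z p : ℝ × ℝ} (h1 : det3 x y p = 0) (h2 : det3 x z p = 0)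
    (h3 : det3 x y z ≠ 0) : p = x := by
  simp only [det3] at h1 h2 h3
  have e1 : det3 x y z * (p.1 - x.1) = 0 := by
    simp only [det3]
    linear_combination (z.1 - x.1) * h1 - (y.1 - x.1) * h2
  have e2 : det3 x y z * (p.2 - x.2) = 0 := by
    simp only [det3]
    linear_combination (z.2 - x.2) * h1 - (y.2 - x.2) * h2
  simp only [det3] at e1 e2
  have p1 : p.1 = x.1 := by
    rcases mul_eq_zero.1 e1 with h | h
    · exact absurd h h3
    · linarith
  have p2 : p.2 = x.2 := by
    rcases mul_eq_zero.1 e2 with h | h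
    · exact absurd h h3
    · linarith
  exact Prod.ext p1 p2

lemma eq_of_mem_two_lines {a b c d x y : ℝ × ℝ} (hab : a ≠ b) (hcd : c ≠ d)
    (hne : line a b ≠ line c d) (hx : x ∈ line a b) (hx' : x ∈ line c d)
    (hy : y ∈ line a b) (hy' : y ∈ line c d) : x = y := by
  by_contra h
  apply hne
  rw [← line_eq_of_mem hab h hx hy, line_eq_of_mem hcd h hx' hy']

lemma line_ne_left {a b c d : ℝ × ℝ} (h : det3 c d a ≠ 0) : line a b ≠ line c d :=
  fun he => h (det3_eq_zero_of_mem (he ▸ left_mem_affineSpan_pair ℝ a b))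

lemma line_ne_right {a b c d : ℝ × ℝ} (h : det3 c d b ≠ 0) : line a b ≠ line c d :=
  fun he => h (det3_eq_zero_of_mem (he ▸ right_mem_affineSpan_pair ℝ a b))

lemma line_ne_left' {a b c d : ℝ × ℝ} (h : det3 a b c ≠ 0) : line a b ≠ line c d :=
  fun he => h (det3_eq_zero_of_mem (he.symm ▸ left_mem_affineSpan_pair ℝ c d))

lemma mem_interT {S : Set (ℝ × ℝ)} {a b c d x : ℝ × ℝ} (ha : a ∈ S) (hb : b ∈ S)
    (hc : c ∈ S) (hd : d ∈ S) (hab : a ≠ b) (hcd : c ≠ d) (hne : line a b ≠ line c d)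
    (h1 : det3 a b x = 0) (h2 : det3 c d x = 0) : x ∈ interT S :=
  ⟨a, ha, b, hb, c, hc, d, hd, hab, hcd, hne, mem_of_det3 hab h1, mem_of_det3 hcd h2⟩

lemma collinear_of_det3 {a b c : ℝ × ℝ} (h : det3 a b c = 0) :
    Collinear ℝ ({a, b, c} : Set (ℝ × ℝ)) := by
  by_cases hab : a = b
  · subst hab
    rw [Set.insert_idem]
    exact collinear_pair ℝ a c
  · have hc : c ∈ line a b := mem_of_det3 hab h
    have := collinear_insert_of_mem_affineSpan_pair hc
    have hset : ({a, b, c} : Set (ℝ × ℝ)) = {c, a, b} := by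
      ext z
      simp only [Set.mem_insert_iff, Set.mem_singleton_iff]
      tauto
    rw [hset]
    exact this

lemma det3_of_not_collinear {a b c : ℝ × ℝ} (h : ¬ Collinear ℝ ({a, b, c} : Set (ℝ × ℝ))) :
    det3 a b c ≠ 0 := fun h0 => h (collinear_of_det3 h0)

lemma not_collinear_of_det3 {a b c : ℝ × ℝ} (h : det3 a b c ≠ 0) :
    ¬ Collinear ℝ ({a, b, c} : Set (ℝ × ℝ)) := by
  intro hc
  rcases (collinear_iff_exists_forall_eq_smul_vadd (k := ℝ) _).1 hc with ⟨p0, v, hv⟩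
  rcases hv a (by simp) with ⟨ta, rfl⟩
  rcases hv b (by simp) with ⟨tb, rfl⟩
  rcases hv c (by simp) with ⟨tc, rfl⟩
  apply h
  simp only [det3, vadd_eq_add, Prod.fst_add, Prod.snd_add, Prod.smul_fst, Prod.smul_snd,
    smul_eq_mul]
  ring

lemma collinear_line (a b : ℝ × ℝ) : Collinear ℝ ((line a b : Set (ℝ × ℝ))) := by
  apply (collinear_iff_exists_forall_eq_smul_vadd (k := ℝ) _).2
  refine ⟨a, b - a, fun p hp => ?_⟩
  rcases mem_line_iff.1 hp with ⟨t, ht⟩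
  exact ⟨t, by rw [vadd_eq_add, ← ht]; abel⟩

lemma exists_triple_of_not_collinear {s : Set (ℝ × ℝ)} (h : ¬ Collinear ℝ s) :
    ∃ a ∈ s, ∃ b ∈ s, ∃ c ∈ s, det3 a b c ≠ 0 := by
  by_contra hc
  push_neg at hc
  apply h
  by_cases hs : ∃ x ∈ s, ∃ y ∈ s, x ≠ y
  · rcases hs with ⟨x, hx, y, hy, hxy⟩
    apply Collinear.subset _ (collinear_line x y)
    intro z hz
    exact mem_of_det3 hxy (hc x hx y hy z hz)
  · push_neg at hs
    rcases s.eq_empty_or_nonempty with rfl | ⟨x, hx⟩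
    · exact collinear_empty ℝ _
    · apply Collinear.subset _ (collinear_singleton ℝ x)
      intro y hy
      simp [hs y hy x hx]


lemma mem_interior_triangle {A B C P : ℝ × ℝ} (hd : det3 A B C ≠ 0) {wa wb wc : ℝ}
    (ha : 0 < wa) (hb : 0 < wb) (hc : 0 < wc) (hw : wa + wb + wc = 1)
    (hP : P = wa • A + wb • B + wc • C) :
    ¬ Collinear ℝ ({A, B, C} : Set (ℝ × ℝ)) ∧
      P ∈ interior (convexHull ℝ ({A, B, C} : Set (ℝ × ℝ))) := by
  have ncol := not_collinear_of_det3 hd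
  refine ⟨ncol, ?_⟩
  have ind : AffineIndependent ℝ ![A, B, C] := affineIndependent_iff_not_collinear_set.2 ncol
  have hcard : Fintype.card (Fin 3) = Module.finrank ℝ (ℝ × ℝ) + 1 := by
    rw [Module.finrank_prod]
    simp
  have htop : affineSpan ℝ (Set.range ![A, B, C]) = ⊤ :=
    ind.affineSpan_eq_top_iff_card_eq_finrank_add_one.2 hcard
  let b : AffineBasis (Fin 3) ℝ (ℝ × ℝ) := ⟨![A, B, C], ind, htop⟩
  have hbfun : ⇑b = ![A, B, C] := rfl
  have hrange : Set.range ⇑b = ({A, B, C} : Set (ℝ × ℝ)) := by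
    rw [hbfun, Matrix.range_cons, Matrix.range_cons, Matrix.range_cons_empty]
    ext z; simp [Set.mem_insert_iff]; tauto
  rw [← hrange, b.interior_convexHull]
  have hsum : ∑ i, ![wa, wb, wc] i = 1 := by
    rw [Fin.sum_univ_three]
    simpa using hw
  have hcomb : P = Finset.univ.affineCombination ℝ ![A, B, C] ![wa, wb, wc] := by
    rw [Finset.affineCombination_eq_linear_combination _ _ _ hsum, Fin.sum_univ_three]
    simpa using hP
  intro i
  have : b.coord i P = ![wa, wb, wc] i := by
    rw [hcomb]
    have := b.coord_apply_combination_of_mem (Finset.mem_univ i) hsum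
    rw [← this]
    rfl
  rw [this]
  fin_cases i
  · simpa using ha
  · simpa using hb
  · simpa using hc

private lemma div_pos_of_mul_pos {x y : ℝ} (h : 0 < x * y) : 0 < x / y := by
  rcases mul_pos_iff.1 h with ⟨h1, h2⟩ | ⟨h1, h2⟩
  · exact div_pos h1 h2
  · exact div_pos_of_neg_of_neg h1 h2

lemma interior_of_det {A B C P : ℝ × ℝ} (hd : det3 A B C ≠ 0)
    (h1 : 0 < det3 B C P * det3 A B C) (h2 : 0 < det3 C A P * det3 A B C)
    (h3 : 0 < det3 A B P * det3 A B C) :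
    ¬ Collinear ℝ ({A, B, C} : Set (ℝ × ℝ)) ∧
      P ∈ interior (convexHull ℝ ({A, B, C} : Set (ℝ × ℝ))) := by
  apply mem_interior_triangle hd (wa := det3 B C P / det3 A B C)
    (wb := det3 C A P / det3 A B C) (wc := det3 A B P / det3 A B C)
    (div_pos_of_mul_pos h1) (div_pos_of_mul_pos h2) (div_pos_of_mul_pos h3)
  · rw [← add_div, ← add_div, det3_sum, div_self hd]
  · have c1 : det3 A B C * P.1
        = det3 B C P * A.1 + det3 C A P * B.1 + det3 A B P * C.1 := by
      simp only [det3]; ring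
    have c2 : det3 A B C * P.2
        = det3 B C P * A.2 + det3 C A P * B.2 + det3 A B P * C.2 := by
      simp only [det3]; ring
    apply Prod.ext
    · simp only [Prod.fst_add, Prod.smul_fst, smul_eq_mul]
      field_simp
      linear_combination c1
    · simp only [Prod.snd_add, Prod.smul_snd, smul_eq_mul]
      field_simp
      linear_combination c2


lemma det3_aba (a b : ℝ × ℝ) : det3 a b a = 0 := by simp only [det3]; ring
lemma det3_abb (a b : ℝ × ℝ) : det3 a b b = 0 := by simp only [det3]; ring

/-- Convex quadrilateral with vertices in (counterclockwise) cyclic order. -/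
def Cvx (A B C D : ℝ × ℝ) : Prop :=
  0 < det3 A B C ∧ 0 < det3 B C D ∧ 0 < det3 C D A ∧ 0 < det3 D A B

lemma det3_param (x y a c : ℝ × ℝ) (t : ℝ) :
    det3 x y (a + t • (c - a)) = det3 x y a + t * (det3 x y c - det3 x y a) := by
  simp only [det3, Prod.fst_add, Prod.snd_add, Prod.smul_fst, Prod.smul_snd,
    Prod.fst_sub, Prod.snd_sub, smul_eq_mul]
  ring

lemma fund1 (A B C D : ℝ × ℝ) :
    det3 D A B * (C.1 - A.1) = det3 C D A * (B.1 - A.1) + det3 A B C * (D.1 - A.1) := by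
  simp only [det3]; ring

lemma fund2 (A B C D : ℝ × ℝ) :
    det3 D A B * (C.2 - A.2) = det3 C D A * (B.2 - A.2) + det3 A B C * (D.2 - A.2) := by
  simp only [det3]; ring

lemma comp1_param (a c : ℝ × ℝ) (t : ℝ) : (a + t • (c - a)).1 = a.1 + t * (c.1 - a.1) := by
  simp [Prod.fst_add]

lemma comp2_param (a c : ℝ × ℝ) (t : ℝ) : (a + t • (c - a)).2 = a.2 + t * (c.2 - a.2) := by
  simp [Prod.snd_add]

lemma quad_lemma {X : Set (ℝ × ℝ)} {A B C D : ℝ × ℝ}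
    (hA : A ∈ X) (hB : B ∈ X) (hC : C ∈ X) (hD : D ∈ X)
    (hcvx : Cvx A B C D) (hk : det3 D A B ≠ det3 C D A) :
    ∃ P Q R E : ℝ × ℝ, P ∈ interT X ∧ Q ∈ interT X ∧ R ∈ interT X ∧ E ∈ interT X ∧
      ¬ Collinear ℝ ({P, Q, R} : Set (ℝ × ℝ)) ∧
      E ∈ interior (convexHull ℝ ({P, Q, R} : Set (ℝ × ℝ))) := by
  obtain ⟨hd1, hd2, hd3, hd4⟩ := hcvx
  have hid : det3 A B C + det3 C D A = det3 B C D + det3 D A B := by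
    simp only [det3]; ring
  have hkne : det3 D A B - det3 C D A ≠ 0 := sub_ne_zero.2 hk
  have h24 : (0:ℝ) < det3 B C D + det3 D A B := by linarith
  obtain ⟨E, hEdef⟩ : ∃ E : ℝ × ℝ,
      E = A + (det3 D A B / (det3 B C D + det3 D A B)) • (C - A) := ⟨_, rfl⟩
  obtain ⟨F, hFdef⟩ : ∃ F : ℝ × ℝ,
      F = A + (det3 A B C / (det3 D A B - det3 C D A)) • (D - A) := ⟨_, rfl⟩
  have hAB : A ≠ B := ne12_of_det3 (ne_of_gt hd1)
  have hBC : B ≠ C := ne12_of_det3 (ne_of_gt hd2)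
  have hCD : C ≠ D := ne12_of_det3 (ne_of_gt hd3)
  have hDA : D ≠ A := ne12_of_det3 (ne_of_gt hd4)
  have hAC : A ≠ C := ne13_of_det3 (ne_of_gt hd1)
  have hBD : B ≠ D := ne13_of_det3 (ne_of_gt hd2)
  have hAD : A ≠ D := hDA.symm
  -- det rewrites
  have hACB : det3 A C B = -det3 A B C := det3_swap A B C
  have hADB : det3 A D B = -det3 D A B := by rw [det3_swap A B D, det3_cyc D A B]
  have hBDA : det3 B D A = det3 D A B := by rw [det3_cyc A B D, det3_cyc D A B]
  have hBDC : det3 B D C = -det3 B C D := det3_swap B C D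
  have hBCA : det3 B C A = det3 A B C := det3_cyc A B C
  have hCDB : det3 C D B = det3 B C D := det3_cyc B C D
  have hDAC : det3 D A C = det3 C D A := det3_cyc C D A
  -- E on line AC
  have hE_AC : det3 A C E = 0 := by
    rw [hEdef, det3_param, det3_aba, det3_abb]; ring
  -- E on line BD
  have hE_BD : det3 B D E = 0 := by
    rw [hEdef, det3_param, hBDA, hBDC]
    field_simp
    ring
  -- F on line AD
  have hF_AD : det3 A D F = 0 := by
    rw [hFdef, det3_param, det3_aba, det3_abb]; ring
  -- F on line BC
  have hF_BC : det3 B C F = 0 := by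
    rw [hFdef, det3_param, hBCA]
    field_simp
    linear_combination -(det3 A B C) * hid
  -- memberships in interT X
  have hEmem : E ∈ interT X :=
    mem_interT hA hC hB hD hAC hBD
      (line_ne_left' (by rw [hACB]; exact neg_ne_zero.2 (ne_of_gt hd1)))
      hE_AC hE_BD
  have hFmem : F ∈ interT X :=
    mem_interT hA hD hB hC hAD hBC
      (line_ne_left (by rw [hBCA]; exact ne_of_gt hd1))
      hF_AD hF_BC
  have hAmem : A ∈ interT X :=
    mem_interT hA hB hA hD hAB hAD
      (line_ne_right (by rw [hADB]; exact neg_ne_zero.2 (ne_of_gt hd4)))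
      (det3_aba A B) (det3_aba A D)
  have hBmem : B ∈ interT X :=
    mem_interT hA hB hB hC hAB hBC
      (line_ne_left (by rw [hBCA]; exact ne_of_gt hd1))
      (det3_abb A B) (det3_aba B C)
  have hCmem : C ∈ interT X :=
    mem_interT hB hC hC hD hBC hCD
      (line_ne_left (by rw [hCDB]; exact ne_of_gt hd2))
      (det3_abb B C) (det3_aba C D)
  have hDmem : D ∈ interT X :=
    mem_interT hC hD hD hA hCD hDA
      (line_ne_left (by rw [hDAC]; exact ne_of_gt hd3))
      (det3_abb C D) (det3_aba D A)
  -- components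
  have hE1 : E.1 = A.1 + det3 D A B / (det3 B C D + det3 D A B) * (C.1 - A.1) := by
    rw [hEdef, comp1_param]
  have hE2 : E.2 = A.2 + det3 D A B / (det3 B C D + det3 D A B) * (C.2 - A.2) := by
    rw [hEdef, comp2_param]
  have hF1 : F.1 = A.1 + det3 A B C / (det3 D A B - det3 C D A) * (D.1 - A.1) := by
    rw [hFdef, comp1_param]
  have hF2 : F.2 = A.2 + det3 A B C / (det3 D A B - det3 C D A) * (D.2 - A.2) := by
    rw [hFdef, comp2_param]
  have hf1 := fund1 A B C D
  have hf2 := fund2 A B C D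
  have hs0 : det3 B C D + det3 D A B ≠ 0 := ne_of_gt h24
  have hE1s : E.1 * (det3 B C D + det3 D A B)
      = A.1 * (det3 B C D + det3 D A B) + det3 D A B * (C.1 - A.1) := by
    rw [hE1]; field_simp
  have hE2s : E.2 * (det3 B C D + det3 D A B)
      = A.2 * (det3 B C D + det3 D A B) + det3 D A B * (C.2 - A.2) := by
    rw [hE2]; field_simp
  have hF1k : F.1 * (det3 D A B - det3 C D A)
      = A.1 * (det3 D A B - det3 C D A) + det3 A B C * (D.1 - A.1) := by
    rw [hF1]; field_simp
  have hF2k : F.2 * (det3 D A B - det3 C D A)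
      = A.2 * (det3 D A B - det3 C D A) + det3 A B C * (D.2 - A.2) := by
    rw [hF2]; field_simp
  rcases lt_or_gt_of_ne hkne with hneg | hpos
  · -- d4 < d3 : triangle C D F
    have hCDD : det3 C D D = 0 := det3_abb C D
    have hCDF_eq : det3 C D F * (det3 D A B - det3 C D A) = -(det3 B C D * det3 C D A) := by
      rw [hFdef, det3_param, hCDD]
      field_simp
      linear_combination -(det3 C D A) * hid
    have hCDF : 0 < det3 C D F := by
      have h' : det3 C D F = -(det3 B C D * det3 C D A) / (det3 D A B - det3 C D A) :=
        (eq_div_iff hkne).2 hCDF_eq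
      rw [h']
      apply div_pos_of_neg_of_neg _ hneg
      simp only [neg_neg, neg_lt, neg_zero]
      positivity
    have hs : (0:ℝ) < det3 B C D + det3 D A B := h24
    have hwc : 0 < det3 D A B / (det3 B C D + det3 D A B) := div_pos hd4 hs
    have hwd : 0 < det3 A B C / (det3 B C D + det3 D A B) := div_pos hd1 hs
    have hwf : 0 < (det3 C D A - det3 D A B) / (det3 B C D + det3 D A B) :=
      div_pos (by linarith) hs
    have hsum : det3 D A B / (det3 B C D + det3 D A B)
        + det3 A B C / (det3 B C D + det3 D A B)
        + (det3 C D A - det3 D A B) / (det3 B C D + det3 D A B) = 1 := by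
      field_simp
      linarith
    have hPeq : E = (det3 D A B / (det3 B C D + det3 D A B)) • C
        + (det3 A B C / (det3 B C D + det3 D A B)) • D
        + ((det3 C D A - det3 D A B) / (det3 B C D + det3 D A B)) • F := by
      apply Prod.ext
      · simp only [Prod.fst_add, Prod.smul_fst, smul_eq_mul]
        rw [div_mul_eq_mul_div, div_mul_eq_mul_div, div_mul_eq_mul_div, ← add_div,
          ← add_div, eq_div_iff hs0]
        apply mul_right_cancel₀ hkne
        linear_combination (det3 D A B - det3 C D A) * hE1s
          + (det3 D A B - det3 C D A) * hF1k
          - A.1 * (det3 D A B - det3 C D A) * hid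
      · simp only [Prod.snd_add, Prod.smul_snd, smul_eq_mul]
        rw [div_mul_eq_mul_div, div_mul_eq_mul_div, div_mul_eq_mul_div, ← add_div,
          ← add_div, eq_div_iff hs0]
        apply mul_right_cancel₀ hkne
        linear_combination (det3 D A B - det3 C D A) * hE2s
          + (det3 D A B - det3 C D A) * hF2k
          - A.2 * (det3 D A B - det3 C D A) * hid
    obtain ⟨hncol, hint⟩ := mem_interior_triangle (ne_of_gt hCDF) hwc hwd hwf hsum hPeq
    exact ⟨C, D, F, E, hCmem, hDmem, hFmem, hEmem, hncol, hint⟩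
  · -- d4 > d3 : triangle A B F
    have hABD : det3 A B D = det3 D A B := det3_cyc D A B
    have hABF_eq : det3 A B F * (det3 D A B - det3 C D A) = det3 A B C * det3 D A B := by
      rw [hFdef, det3_param, det3_aba, hABD]
      field_simp
      ring
    have hABF : 0 < det3 A B F := by
      have h' : det3 A B F = det3 A B C * det3 D A B / (det3 D A B - det3 C D A) :=
        (eq_div_iff hkne).2 hABF_eq
      rw [h']
      apply div_pos (by positivity) (by linarith)
    have hs : (0:ℝ) < det3 B C D + det3 D A B := h24
    have hwa : 0 < det3 B C D / (det3 B C D + det3 D A B) := div_pos hd2 hs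
    have hwb : 0 < det3 C D A / (det3 B C D + det3 D A B) := div_pos hd3 hs
    have hwf : 0 < (det3 D A B - det3 C D A) / (det3 B C D + det3 D A B) :=
      div_pos (by linarith) hs
    have hsum : det3 B C D / (det3 B C D + det3 D A B)
        + det3 C D A / (det3 B C D + det3 D A B)
        + (det3 D A B - det3 C D A) / (det3 B C D + det3 D A B) = 1 := by
      field_simp
      ring
    have hPeq : E = (det3 B C D / (det3 B C D + det3 D A B)) • A
        + (det3 C D A / (det3 B C D + det3 D A B)) • B
        + ((det3 D A B - det3 C D A) / (det3 B C D + det3 D A B)) • F := by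
      apply Prod.ext
      · simp only [Prod.fst_add, Prod.smul_fst, smul_eq_mul]
        rw [div_mul_eq_mul_div, div_mul_eq_mul_div, div_mul_eq_mul_div, ← add_div,
          ← add_div, eq_div_iff hs0]
        apply mul_right_cancel₀ hkne
        linear_combination (det3 D A B - det3 C D A) * hE1s
          - (det3 D A B - det3 C D A) * hF1k
          + (det3 D A B - det3 C D A) * hf1
      · simp only [Prod.snd_add, Prod.smul_snd, smul_eq_mul]
        rw [div_mul_eq_mul_div, div_mul_eq_mul_div, div_mul_eq_mul_div, ← add_div,
          ← add_div, eq_div_iff hs0]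
        apply mul_right_cancel₀ hkne
        linear_combination (det3 D A B - det3 C D A) * hE2s
          - (det3 D A B - det3 C D A) * hF2k
          + (det3 D A B - det3 C D A) * hf2
    obtain ⟨hncol, hint⟩ := mem_interior_triangle (ne_of_gt hABF) hwa hwb hwf hsum hPeq
    exact ⟨A, B, F, E, hAmem, hBmem, hFmem, hEmem, hncol, hint⟩

lemma det3_swap12 (a b c : ℝ × ℝ) : det3 b a c = -det3 a b c := by simp only [det3]; ring
lemma det3_swap13 (a b c : ℝ × ℝ) : det3 c b a = -det3 a b c := by simp only [det3]; ring

/-- interior-point configuration in `X` -/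
def IntConf (X : Set (ℝ × ℝ)) : Prop :=
  ∃ P Q R E : ℝ × ℝ, P ∈ X ∧ Q ∈ X ∧ R ∈ X ∧ E ∈ X ∧
    ¬ Collinear ℝ ({P, Q, R} : Set (ℝ × ℝ)) ∧
    E ∈ interior (convexHull ℝ ({P, Q, R} : Set (ℝ × ℝ)))

lemma four_point_core {X : Set (ℝ × ℝ)} {A B C D : ℝ × ℝ}
    (hA : A ∈ X) (hB : B ∈ X) (hC : C ∈ X) (hD : D ∈ X)
    (h0 : 0 < det3 A B C) (n1 : det3 A B D ≠ 0) (n2 : det3 B C D ≠ 0)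
    (n3 : det3 C A D ≠ 0) :
    IntConf X ∨ Cvx A B C D ∨ Cvx A D B C ∨ Cvx A B D C := by
  have hsum : det3 B C D + det3 C A D + det3 A B D = det3 A B C := det3_sum A B C D
  have eCDA : det3 C D A = -det3 C A D := det3_swap C A D
  have eDAB : det3 D A B = det3 A B D := (det3_cyc D A B).symm
  have eADB : det3 A D B = -det3 A B D := det3_swap A B D
  have eDBC : det3 D B C = det3 B C D := by
    rw [← det3_cyc B C D, ← det3_cyc C D B]
  have eBCA : det3 B C A = det3 A B C := det3_cyc A B C
  have eBDC : det3 B D C = -det3 B C D := det3_swap B C D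
  have eDCA : det3 D C A = det3 C A D := by
    rw [← det3_cyc C A D, ← det3_cyc A D C]
  have eCAB : det3 C A B = det3 A B C := by
    rw [← det3_cyc A B C, ← det3_cyc B C A]
  have eDAC : det3 D A C = -det3 C A D := by
    rw [show det3 D A C = det3 A C D from (det3_cyc D A C).symm]
    exact det3_swap12 C A D
  have eDBA : det3 D B A = -det3 A B D := det3_swap13 A B D
  have eACD : det3 A C D = -det3 C A D := det3_swap12 C A D
  have eCDB : det3 C D B = det3 B C D := det3_cyc B C D
  have eACB : det3 A C B = -det3 A B C := det3_swap A B C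
  rcases lt_or_gt_of_ne n1 with s1n | s1p
  all_goals rcases lt_or_gt_of_ne n2 with s2n | s2p
  all_goals rcases lt_or_gt_of_ne n3 with s3n | s3p
  -- order: (s1n s2n s3n) (s1n s2n s3p) (s1n s2p s3n) (s1n s2p s3p)
  --        (s1p s2n s3n) (s1p s2n s3p) (s1p s2p s3n) (s1p s2p s3p)
  · -- all negative: impossible
    exfalso; linarith
  · -- (−,−,+): B inside A C D
    left
    obtain ⟨h1, h2⟩ := interior_of_det (A := A) (B := C) (C := D) (P := B)
      (by rw [eACD]; exact neg_ne_zero.2 n3)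
      (by rw [eCDB, eACD]; exact mul_pos_of_neg_of_neg s2n (by linarith))
      (by rw [eDAB, eACD]; exact mul_pos_of_neg_of_neg s1n (by linarith))
      (by rw [eACB, eACD]; exact mul_pos_of_neg_of_neg (by linarith) (by linarith))
    exact ⟨A, C, D, B, hA, hC, hD, hB, h1, h2⟩
  · -- (−,+,−): A inside B C D
    left
    obtain ⟨h1, h2⟩ := interior_of_det (A := B) (B := C) (C := D) (P := A) (ne_of_gt s2p)
      (by rw [eCDA]; exact mul_pos (by linarith) s2p)
      (by rw [eDBA]; exact mul_pos (by linarith) s2p)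
      (by rw [eBCA]; exact mul_pos h0 s2p)
    exact ⟨B, C, D, A, hB, hC, hD, hA, h1, h2⟩
  · -- (−,+,+): Cvx A D B C
    right; right; left
    exact ⟨by rw [eADB]; linarith, by rw [eDBC]; linarith, by rw [eBCA]; linarith, s3p⟩
  · -- (+,−,−): C inside A B D
    left
    obtain ⟨h1, h2⟩ := interior_of_det (A := A) (B := B) (C := D) (P := C) (ne_of_gt s1p)
      (by rw [eBDC]; exact mul_pos (by linarith) s1p)
      (by rw [eDAC]; exact mul_pos (by linarith) s1p)
      (by exact mul_pos h0 s1p)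
    exact ⟨A, B, D, C, hA, hB, hD, hC, h1, h2⟩
  · -- (+,−,+): Cvx A B D C
    right; right; right
    exact ⟨s1p, by rw [eBDC]; linarith, by rw [eDCA]; linarith, by rw [eCAB]; linarith⟩
  · -- (+,+,−): Cvx A B C D
    right; left
    exact ⟨h0, s2p, by rw [eCDA]; linarith, by rw [eDAB]; linarith⟩
  · -- (+,+,+): D inside A B C
    left
    obtain ⟨h1, h2⟩ := interior_of_det (A := A) (B := B) (C := C) (P := D) (ne_of_gt h0)
      (by exact mul_pos s2p h0) (by exact mul_pos s3p h0) (by exact mul_pos s1p h0)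
    exact ⟨A, B, C, D, hA, hB, hC, hD, h1, h2⟩


lemma cvx_cyc {P Q R T : ℝ × ℝ} (h : Cvx P Q R T) : Cvx Q R T P :=
  ⟨h.2.1, h.2.2.1, h.2.2.2, h.1⟩

lemma det3_coords (A u v : ℝ × ℝ) (x1 y1 x2 y2 x3 y3 : ℝ) :
    det3 (A + x1 • u + y1 • v) (A + x2 • u + y2 • v) (A + x3 • u + y3 • v)
      = ((x2 - x1) * (y3 - y1) - (y2 - y1) * (x3 - x1)) * (u.1 * v.2 - u.2 * v.1) := by
  simp only [det3, Prod.fst_add, Prod.snd_add, Prod.smul_fst, Prod.smul_snd, smul_eq_mul]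
  ring

lemma det3_coordsA1 (A u v : ℝ × ℝ) (x2 y2 x3 y3 : ℝ) :
    det3 A (A + x2 • u + y2 • v) (A + x3 • u + y3 • v)
      = (x2 * y3 - y2 * x3) * (u.1 * v.2 - u.2 * v.1) := by
  simp only [det3, Prod.fst_add, Prod.snd_add, Prod.smul_fst, Prod.smul_snd, smul_eq_mul]
  ring

lemma det3_coordsA2 (A u v : ℝ × ℝ) (x1 y1 x3 y3 : ℝ) :
    det3 (A + x1 • u + y1 • v) A (A + x3 • u + y3 • v)
      = (y1 * x3 - x1 * y3) * (u.1 * v.2 - u.2 * v.1) := by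
  simp only [det3, Prod.fst_add, Prod.snd_add, Prod.smul_fst, Prod.smul_snd, smul_eq_mul]
  ring

lemma det3_coordsA3 (A u v : ℝ × ℝ) (x1 y1 x2 y2 : ℝ) :
    det3 (A + x1 • u + y1 • v) (A + x2 • u + y2 • v) A
      = (x1 * y2 - y1 * x2) * (u.1 * v.2 - u.2 * v.1) := by
  simp only [det3, Prod.fst_add, Prod.snd_add, Prod.smul_fst, Prod.smul_snd, smul_eq_mul]
  ring

lemma pgram_of_dets {P Q R T : ℝ × ℝ} (hd : det3 P Q T ≠ 0)
    (h1 : det3 T P Q = det3 R T P) (h2 : det3 T P Q = det3 P Q R) : Q - P = R - T := by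
  have k1 : det3 P Q T * (Q.1 - P.1 - (R.1 - T.1))
      = (det3 T P Q - det3 P Q R) * (T.1 - P.1) + (det3 T P Q - det3 R T P) * (Q.1 - P.1) := by
    simp only [det3]; ring
  have k2 : det3 P Q T * (Q.2 - P.2 - (R.2 - T.2))
      = (det3 T P Q - det3 P Q R) * (T.2 - P.2) + (det3 T P Q - det3 R T P) * (Q.2 - P.2) := by
    simp only [det3]; ring
  rw [← h2, ← h1] at k1 k2
  simp only [sub_self, zero_mul, add_zero, zero_add] at k1 k2
  rcases mul_eq_zero.1 k1 with h | h
  · exact absurd h hd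
  · rcases mul_eq_zero.1 k2 with h' | h'
    · exact absurd h' hd
    · apply Prod.ext
      · simp only [Prod.fst_sub]; linarith
      · simp only [Prod.snd_sub]; linarith

lemma pgram_edge {S : Set (ℝ × ℝ)} {A B C D w : ℝ × ℝ}
    (hA : A ∈ S) (hB : B ∈ S) (hC : C ∈ S) (hD : D ∈ S) (hw : w ∈ S)
    (hcvx : Cvx A B C D) (hpar : B - A = C - D) {s : ℝ}
    (hwrep : w = A + s • (B - A)) (hs0 : s ≠ 0) (hs1 : s ≠ 1) :
    IntConf (interT S) := by
  obtain ⟨hd1, hd2, hd3, hd4⟩ := hcvx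
  have hδ : 0 < det3 A B D := by
    have h := det3_cyc D A B
    linarith
  obtain ⟨u, hu⟩ : ∃ u : ℝ × ℝ, u = B - A := ⟨_, rfl⟩
  obtain ⟨v, hv⟩ : ∃ v : ℝ × ℝ, v = D - A := ⟨_, rfl⟩
  have hC' : C = B + D - A := eq_sub_of_add_eq (sub_eq_sub_iff_add_eq_add.mp hpar).symm
  have rB : B = A + (1:ℝ) • u + (0:ℝ) • v := by rw [hu, hv]; module
  have rC : C = A + (1:ℝ) • u + (1:ℝ) • v := by rw [hu, hv, hC']; module
  have rD : D = A + (0:ℝ) • u + (1:ℝ) • v := by rw [hu, hv]; module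
  have rw' : w = A + s • u + (0:ℝ) • v := by rw [hu, hv, hwrep]; module
  have hδ' : u.1 * v.2 - u.2 * v.1 = det3 A B D := by
    rw [hu, hv]; simp only [det3, Prod.fst_sub, Prod.snd_sub]
  have dwBC : det3 w B C = (1 - s) * det3 A B D := by
    conv_lhs => rw [rw', rB, rC]
    rw [det3_coords, hδ']; ring
  have dCDw : det3 C D w = det3 A B D := by
    conv_lhs => rw [rC, rD, rw']
    rw [det3_coords, hδ']; ring
  have dDwB : det3 D w B = (1 - s) * det3 A B D := by
    conv_lhs => rw [rD, rw', rB]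
    rw [det3_coords, hδ']; ring
  have dAwC : det3 A w C = s * det3 A B D := by
    conv_lhs => rw [rw', rC]
    rw [det3_coordsA1, hδ']; ring
  have dwCD : det3 w C D = det3 A B D := by
    conv_lhs => rw [rw', rC, rD]
    rw [det3_coords, hδ']; ring
  have dDAw : det3 D A w = s * det3 A B D := by
    conv_lhs => rw [rD, rw']
    rw [det3_coordsA2, hδ']; ring
  have dCDA : det3 C D A = det3 A B D := by
    conv_lhs => rw [rC, rD]
    rw [det3_coordsA3, hδ']; ring
  rcases lt_or_gt_of_ne (sub_ne_zero.2 hs1) with hlt | hgt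
  · -- s < 1 : quad (w, B, C, D)
    have hs1' : s < 1 := by linarith
    apply quad_lemma hw hB hC hD
      ⟨by rw [dwBC]; exact mul_pos (by linarith) hδ, hd2,
        by rw [dCDw]; exact hδ, by rw [dDwB]; exact mul_pos (by linarith) hδ⟩
    rw [dDwB, dCDw]
    intro h
    have h2 : (1 - s) = 1 :=
      mul_right_cancel₀ (ne_of_gt hδ) (h.trans (one_mul _).symm)
    exact hs0 (by linarith)
  · -- s > 1 : quad (A, w, C, D)
    have hs1' : 1 < s := by linarith
    apply quad_lemma hA hw hC hD
      ⟨by rw [dAwC]; exact mul_pos (by linarith) hδ,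
        by rw [dwCD]; exact hδ, hd3, by rw [dDAw]; exact mul_pos (by linarith) hδ⟩
    rw [dDAw, dCDA]
    intro h
    have h2 : s = 1 := mul_right_cancel₀ (ne_of_gt hδ) (h.trans (one_mul _).symm)
    exact hs1 h2

lemma pgram_diag {S : Set (ℝ × ℝ)} {A B C D w : ℝ × ℝ}
    (hA : A ∈ S) (hB : B ∈ S) (hC : C ∈ S) (hD : D ∈ S) (hw : w ∈ S)
    (hcvx : Cvx A B C D) (hpar : B - A = C - D) {s : ℝ}
    (hwrep : w = A + s • (C - A)) (hs0 : s ≠ 0) (hs1 : s ≠ 1) (hsh : s ≠ 1/2) :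
    IntConf S ∨ IntConf (interT S) := by
  obtain ⟨hd1, hd2, hd3, hd4⟩ := hcvx
  have hδ : 0 < det3 A B D := by
    have h := det3_cyc D A B
    linarith
  obtain ⟨u, hu⟩ : ∃ u : ℝ × ℝ, u = B - A := ⟨_, rfl⟩
  obtain ⟨v, hv⟩ : ∃ v : ℝ × ℝ, v = D - A := ⟨_, rfl⟩
  have hC' : C = B + D - A := eq_sub_of_add_eq (sub_eq_sub_iff_add_eq_add.mp hpar).symm
  have rA : A = A + (0:ℝ) • u + (0:ℝ) • v := by module
  have rB : B = A + (1:ℝ) • u + (0:ℝ) • v := by rw [hu, hv]; module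
  have rC : C = A + (1:ℝ) • u + (1:ℝ) • v := by rw [hu, hv, hC']; module
  have rD : D = A + (0:ℝ) • u + (1:ℝ) • v := by rw [hu, hv]; module
  have rw' : w = A + s • u + s • v := by rw [hu, hv, hwrep, hC']; module
  have hδ' : u.1 * v.2 - u.2 * v.1 = det3 A B D := by
    rw [hu, hv]; simp only [det3, Prod.fst_sub, Prod.snd_sub]
  rcases lt_or_gt_of_ne hs0 with hneg | hpos
  · -- s < 0 : quad (w, B, C, D)
    right
    have dwBC : det3 w B C = (1 - s) * det3 A B D := by
      conv_lhs => rw [rw', rB, rC]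
      rw [det3_coords, hδ']; ring
    have dCDw : det3 C D w = (1 - s) * det3 A B D := by
      conv_lhs => rw [rC, rD, rw']
      rw [det3_coords, hδ']; ring
    have dDwB : det3 D w B = (1 - 2*s) * det3 A B D := by
      conv_lhs => rw [rD, rw', rB]
      rw [det3_coords, hδ']; ring
    apply quad_lemma hw hB hC hD
      ⟨by rw [dwBC]; exact mul_pos (by linarith) hδ, hd2,
        by rw [dCDw]; exact mul_pos (by linarith) hδ,
        by rw [dDwB]; exact mul_pos (by linarith) hδ⟩
    rw [dDwB, dCDw]
    intro h
    have h2 : 1 - 2*s = 1 - s := mul_right_cancel₀ (ne_of_gt hδ) h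
    exact hs0 (by linarith)
  · rcases lt_trichotomy s (1/2) with hlt | heq | hgt
    · -- 0 < s < 1/2 : w inside A B D
      left
      obtain ⟨hnc, hint⟩ := mem_interior_triangle (A := A) (B := B) (C := D) (P := w)
        (ne_of_gt hδ)
        (wa := 1 - 2*s) (wb := s) (wc := s) (by linarith) hpos hpos (by ring)
        (by rw [rw', rB, rD]; module)
      exact ⟨A, B, D, w, hA, hB, hD, hw, hnc, hint⟩
    · exact absurd heq hsh
    · rcases lt_trichotomy s 1 with hlt1 | heq1 | hgt1
      · -- 1/2 < s < 1 : w inside C B D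
        left
        have hCBD : det3 C B D ≠ 0 := by
          rw [det3_swap12 B C D]
          exact neg_ne_zero.2 (ne_of_gt hd2)
        obtain ⟨hnc, hint⟩ := mem_interior_triangle (A := C) (B := B) (C := D) (P := w) hCBD
          (wa := 2*s - 1) (wb := 1 - s) (wc := 1 - s)
          (by linarith) (by linarith) (by linarith) (by ring)
          (by rw [rw', rC, rB, rD]; module)
        exact ⟨C, B, D, w, hC, hB, hD, hw, hnc, hint⟩
      · exact absurd heq1 hs1
      · -- s > 1 : quad (A, B, w, D)
        right
        have dABw : det3 A B w = s * det3 A B D := by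
          conv_lhs => rw [rB, rw']
          rw [det3_coordsA1, hδ']; ring
        have dBwD : det3 B w D = (2*s - 1) * det3 A B D := by
          conv_lhs => rw [rB, rw', rD]
          rw [det3_coords, hδ']; ring
        have dwDA : det3 w D A = s * det3 A B D := by
          conv_lhs => rw [rw', rD]
          rw [det3_coordsA3, hδ']; ring
        apply quad_lemma hA hB hw hD
          ⟨by rw [dABw]; exact mul_pos (by linarith) hδ,
            by rw [dBwD]; exact mul_pos (by linarith) hδ,
            by rw [dwDA]; exact mul_pos (by linarith) hδ, hd4⟩
        rw [dwDA]
        intro h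
        have hDAB : det3 D A B = det3 A B D := (det3_cyc D A B).symm
        rw [hDAB] at h
        have h2 : (1:ℝ) = s :=
          mul_right_cancel₀ (ne_of_gt hδ) (by rw [one_mul]; exact h)
        exact hs1 h2.symm


lemma four_point {X : Set (ℝ × ℝ)} {A B C D : ℝ × ℝ}
    (hA : A ∈ X) (hB : B ∈ X) (hC : C ∈ X) (hD : D ∈ X)
    (n0 : det3 A B C ≠ 0) (n1 : det3 A B D ≠ 0) (n2 : det3 B C D ≠ 0)
    (n3 : det3 C A D ≠ 0) :
    IntConf X ∨ Cvx A B C D ∨ Cvx A D B C ∨ Cvx A B D C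
      ∨ Cvx B A C D ∨ Cvx B D A C ∨ Cvx B A D C := by
  rcases lt_or_gt_of_ne n0 with hneg | hpos
  · have h0' : 0 < det3 B A C := by rw [det3_swap12 A B C]; linarith
    have n1' : det3 B A D ≠ 0 := by rw [det3_swap12 A B D]; exact neg_ne_zero.2 n1
    have n2' : det3 A C D ≠ 0 := by rw [det3_swap12 C A D]; exact neg_ne_zero.2 n3
    have n3' : det3 C B D ≠ 0 := by rw [det3_swap12 B C D]; exact neg_ne_zero.2 n2
    rcases four_point_core hB hA hC hD h0' n1' n2' n3' with h | h | h | h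
    · exact Or.inl h
    · exact Or.inr (Or.inr (Or.inr (Or.inr (Or.inl h))))
    · exact Or.inr (Or.inr (Or.inr (Or.inr (Or.inr (Or.inl h)))))
    · exact Or.inr (Or.inr (Or.inr (Or.inr (Or.inr (Or.inr h)))))
  · rcases four_point_core hA hB hC hD hpos n1 n2 n3 with h | h | h | h
    · exact Or.inl h
    · exact Or.inr (Or.inl h)
    · exact Or.inr (Or.inr (Or.inl h))
    · exact Or.inr (Or.inr (Or.inr (Or.inl h)))

lemma pgram_generic {S : Set (ℝ × ℝ)} {A B C D w : ℝ × ℝ}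
    (hA : A ∈ S) (hB : B ∈ S) (hC : C ∈ S) (hD : D ∈ S) (hw : w ∈ S)
    (hcvx : Cvx A B C D) (hpar : B - A = C - D) {s t : ℝ}
    (hwrep : w = A + s • (B - A) + t • (D - A))
    (hs0 : s ≠ 0) (hs1 : s ≠ 1) (ht0 : t ≠ 0) (ht1 : t ≠ 1) (hst : s ≠ t) :
    IntConf S ∨ IntConf (interT S) := by
  obtain ⟨hd1, hd2, hd3, hd4⟩ := hcvx
  have hδ : 0 < det3 A B D := by
    have h := det3_cyc D A B
    linarith
  have cancel : ∀ a b : ℝ, a * det3 A B D = b * det3 A B D → a = b :=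
    fun a b h => mul_right_cancel₀ (ne_of_gt hδ) h
  obtain ⟨u, hu⟩ : ∃ u : ℝ × ℝ, u = B - A := ⟨_, rfl⟩
  obtain ⟨v, hv⟩ : ∃ v : ℝ × ℝ, v = D - A := ⟨_, rfl⟩
  have hC' : C = B + D - A := eq_sub_of_add_eq (sub_eq_sub_iff_add_eq_add.mp hpar).symm
  have rB : B = A + (1:ℝ) • u + (0:ℝ) • v := by rw [hu, hv]; module
  have rC : C = A + (1:ℝ) • u + (1:ℝ) • v := by rw [hu, hv, hC']; module
  have rw' : w = A + s • u + t • v := by rw [hu, hv, hwrep]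
  have hδ' : u.1 * v.2 - u.2 * v.1 = det3 A B D := by
    rw [hu, hv]; simp only [det3, Prod.fst_sub, Prod.snd_sub]
  have dABw : det3 A B w = t * det3 A B D := by
    conv_lhs => rw [rB, rw']
    rw [det3_coordsA1, hδ']; ring
  have dBCw : det3 B C w = (1 - s) * det3 A B D := by
    conv_lhs => rw [rB, rC, rw']
    rw [det3_coords, hδ']; ring
  have dCAw : det3 C A w = (s - t) * det3 A B D := by
    conv_lhs => rw [rC, rw']
    rw [det3_coordsA2, hδ']; ring
  have dwAB : det3 w A B = t * det3 A B D := by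
    conv_lhs => rw [rw', rB]
    rw [det3_coordsA2, hδ']; ring
  have dCwA : det3 C w A = (t - s) * det3 A B D := by
    conv_lhs => rw [rC, rw']
    rw [det3_coordsA3, hδ']; ring
  have dAwB : det3 A w B = -t * det3 A B D := by
    conv_lhs => rw [rw', rB]
    rw [det3_coordsA1, hδ']; ring
  have dCAB : det3 C A B = det3 A B D := by
    conv_lhs => rw [rC, rB]
    rw [det3_coordsA2, hδ']; ring
  have dBAC : det3 B A C = -det3 A B D := by
    conv_lhs => rw [rB, rC]
    rw [det3_coordsA2, hδ']; ring
  have dwBA : det3 w B A = -t * det3 A B D := by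
    conv_lhs => rw [rw', rB]
    rw [det3_coordsA3, hδ']; ring
  have dCBw : det3 C B w = (s - 1) * det3 A B D := by
    conv_lhs => rw [rC, rB, rw']
    rw [det3_coords, hδ']; ring
  have dACB : det3 A C B = -det3 A B D := by
    conv_lhs => rw [rC, rB]
    rw [det3_coordsA1, hδ']; ring
  have dCBA : det3 C B A = -det3 A B D := by
    conv_lhs => rw [rC, rB]
    rw [det3_coordsA3, hδ']; ring
  have dwCB : det3 w C B = (s - 1) * det3 A B D := by
    conv_lhs => rw [rw', rC, rB]
    rw [det3_coords, hδ']; ring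
  have n0 : det3 A B C ≠ 0 := ne_of_gt hd1
  have n1 : det3 A B w ≠ 0 := by
    rw [dABw]; exact mul_ne_zero ht0 (ne_of_gt hδ)
  have n2 : det3 B C w ≠ 0 := by
    rw [dBCw]; exact mul_ne_zero (sub_ne_zero.2 (fun h => hs1 h.symm)) (ne_of_gt hδ)
  have n3 : det3 C A w ≠ 0 := by
    rw [dCAw]; exact mul_ne_zero (sub_ne_zero.2 hst) (ne_of_gt hδ)
  rcases four_point hA hB hC hw n0 n1 n2 n3 with h | h | h | h | h | h | h
  · exact Or.inl h
  · -- Cvx A B C w : quad (A,B,C,w)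
    right
    apply quad_lemma hA hB hC hw h
    rw [dwAB, dCwA]
    intro heq
    exact hs0 (by linarith [cancel _ _ heq])
  · -- Cvx A w B C : quad (w,B,C,A)
    right
    apply quad_lemma hw hB hC hA (cvx_cyc h)
    rw [dAwB, dCAw]
    intro heq
    exact hs0 (by linarith [cancel _ _ heq])
  · -- Cvx A B w C : quad (B,w,C,A)
    right
    apply quad_lemma hB hw hC hA (cvx_cyc h)
    rw [dABw, dCAB]
    intro heq
    have := cancel t 1 (by rw [one_mul]; exact heq)
    exact ht1 this
  · -- Cvx B A C w : quad (A,C,w,B)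
    right
    apply quad_lemma hA hC hw hB (cvx_cyc h)
    rw [dBAC, dwBA]
    intro heq
    have : (-1 : ℝ) = -t := cancel (-1) (-t) (by rw [neg_one_mul]; exact heq)
    exact ht1 (by linarith)
  · -- Cvx B w A C : quad (B,w,A,C)
    right
    apply quad_lemma hB hw hA hC h
    rw [dCBw, dACB]
    intro heq
    have : s - 1 = -1 := cancel (s-1) (-1) (by rw [heq]; ring)
    exact hs0 (by linarith)
  · -- Cvx B A w C : quad (B,A,w,C)
    right
    apply quad_lemma hB hA hw hC h
    rw [dCBA, dwCB]
    intro heq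
    have : (-1:ℝ) = s - 1 := cancel (-1) (s-1) (by rw [neg_one_mul]; exact heq)
    exact hs0 (by linarith)


lemma par_key {P Q R T : ℝ × ℝ} (h : Q - P = R - T) (x : ℝ × ℝ) :
    det3 P Q x + det3 R T x = det3 P Q R := by
  have h1 : Q.1 - P.1 = R.1 - T.1 := by
    have := congrArg Prod.fst h; simpa using this
  have h2 : Q.2 - P.2 = R.2 - T.2 := by
    have := congrArg Prod.snd h; simpa using this
  simp only [det3]
  linear_combination (x.2 - R.2) * h1 + (R.1 - x.1) * h2

lemma interT_five {Y : Set (ℝ × ℝ)} {A B C D : ℝ × ℝ}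
    (hAY : A ∈ Y) (hBY : B ∈ Y) (hCY : C ∈ Y) (hDY : D ∈ Y)
    (hcvx : Cvx A B C D) (hpar : B - A = C - D)
    (hsub : Y ⊆ ({A, B, C, D, A + (2⁻¹:ℝ) • (C - A)} : Set (ℝ × ℝ))) :
    interT Y = ({A, B, C, D, A + (2⁻¹:ℝ) • (C - A)} : Set (ℝ × ℝ)) := by
  obtain ⟨hd1, hd2, hd3, hd4⟩ := hcvx
  set E : ℝ × ℝ := A + (2⁻¹:ℝ) • (C - A) with hE
  have hδ : 0 < det3 A B D := by
    have h := det3_cyc D A B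
    linarith
  obtain ⟨u, hu⟩ : ∃ u : ℝ × ℝ, u = B - A := ⟨_, rfl⟩
  obtain ⟨v, hv⟩ : ∃ v : ℝ × ℝ, v = D - A := ⟨_, rfl⟩
  have hC' : C = B + D - A := eq_sub_of_add_eq (sub_eq_sub_iff_add_eq_add.mp hpar).symm
  have rB : B = A + (1:ℝ) • u + (0:ℝ) • v := by rw [hu, hv]; module
  have rC : C = A + (1:ℝ) • u + (1:ℝ) • v := by rw [hu, hv, hC']; module
  have rD : D = A + (0:ℝ) • u + (1:ℝ) • v := by rw [hu, hv]; module
  have rE : E = A + (2⁻¹:ℝ) • u + (2⁻¹:ℝ) • v := by rw [hE, hu, hv, hC']; module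
  have hδ' : u.1 * v.2 - u.2 * v.1 = det3 A B D := by
    rw [hu, hv]; simp only [det3, Prod.fst_sub, Prod.snd_sub]
  have hAB : A ≠ B := ne12_of_det3 (ne_of_gt hd1)
  have hBC : B ≠ C := ne12_of_det3 (ne_of_gt hd2)
  have hCD : C ≠ D := ne12_of_det3 (ne_of_gt hd3)
  have hDA : D ≠ A := ne12_of_det3 (ne_of_gt hd4)
  have hAC : A ≠ C := ne13_of_det3 (ne_of_gt hd1)
  have hBD : B ≠ D := ne13_of_det3 (ne_of_gt hd2)
  have hAD : A ≠ D := hDA.symm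
  have dABE : det3 A B E = 2⁻¹ * det3 A B D := by
    conv_lhs => rw [rB, rE]
    rw [det3_coordsA1, hδ']; ring
  have dCDE : det3 C D E = 2⁻¹ * det3 A B D := by
    conv_lhs => rw [rC, rD, rE]
    rw [det3_coords, hδ']; ring
  have dABEne : det3 A B E ≠ 0 := by
    rw [dABE]; positivity
  have dCDEne : det3 C D E ≠ 0 := by
    rw [dCDE]; positivity
  have hAE : A ≠ E := ne13_of_det3 dABEne
  have hBE : B ≠ E := ne23_of_det3 dABEne
  have hCE : C ≠ E := ne13_of_det3 dCDEne
  have hDE : D ≠ E := ne23_of_det3 dCDEne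
  have dACE : det3 A C E = 0 := by
    rw [hE, det3_param, det3_aba, det3_abb]; ring
  have dBDE : det3 B D E = 0 := by
    conv_lhs => rw [rB, rD, rE]
    rw [det3_coords]
    norm_num
  have hEL5 : E ∈ line A C := mem_of_det3 hAC dACE
  have hEL6 : E ∈ line B D := mem_of_det3 hBD dBDE
  have hBCA : det3 B C A = det3 A B C := det3_cyc A B C
  have hADB : det3 A D B = -det3 D A B := by rw [det3_swap A B D, det3_cyc D A B]
  have hBDA : det3 B D A = det3 D A B := by rw [det3_cyc A B D, det3_cyc D A B]
  have hBDC : det3 B D C = -det3 B C D := det3_swap B C D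
  have hCDB : det3 C D B = det3 B C D := det3_cyc B C D
  have hDAC : det3 D A C = det3 C D A := det3_cyc C D A
  have hACB : det3 A C B = -det3 A B C := det3_swap A B C
  have hACD : det3 A C D = det3 C D A := (det3_cyc A C D).symm
  have hpar2 : C - B = D - A := by rw [hC']; abel
  have par13 : ∀ x : ℝ × ℝ, x ∈ line A B → x ∈ line C D → False := by
    intro x h1 h2
    have k1 := det3_eq_zero_of_mem h1
    have k2 := det3_eq_zero_of_mem h2
    have := par_key hpar x
    rw [k1, k2] at this
    exact (ne_of_gt hd1) (by linarith)
  have par24 : ∀ x : ℝ × ℝ, x ∈ line B C → x ∈ line D A → False := by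
    intro x h1 h2
    have k1 := det3_eq_zero_of_mem h1
    have k2 := det3_eq_zero_of_mem h2
    have := par_key hpar2 x
    rw [k1, k2] at this
    exact (ne_of_gt hd2) (by linarith)
  have lineclass : ∀ a b : ℝ × ℝ, a ∈ Y → b ∈ Y → a ≠ b →
      line a b = line A B ∨ line a b = line B C ∨ line a b = line C D ∨
      line a b = line D A ∨ line a b = line A C ∨ line a b = line B D := by
    intro a b haY hbY hab
    have ka := hsub haY
    have kb := hsub hbY
    simp only [Set.mem_insert_iff, Set.mem_singleton_iff, ← hE] at ka kb
    rcases ka with h1 | h1 | h1 | h1 | h1 <;>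
      rcases kb with h2 | h2 | h2 | h2 | h2 <;>
      rw [h1, h2]
    · exact absurd (h1.trans h2.symm) hab
    · exact Or.inl (rfl)
    · exact Or.inr (Or.inr (Or.inr (Or.inr (Or.inl (rfl)))))
    · exact Or.inr (Or.inr (Or.inr (Or.inl (line_eq_of_mem hDA hAD (right_mem_affineSpan_pair ℝ D A) (left_mem_affineSpan_pair ℝ D A)))))
    · exact Or.inr (Or.inr (Or.inr (Or.inr (Or.inl (line_eq_of_mem hAC hAE (left_mem_affineSpan_pair ℝ A C) hEL5)))))
    · exact Or.inl (line_eq_of_mem hAB (Ne.symm hAB) (right_mem_affineSpan_pair ℝ A B) (left_mem_affineSpan_pair ℝ A B))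
    · exact absurd (h1.trans h2.symm) hab
    · exact Or.inr (Or.inl (rfl))
    · exact Or.inr (Or.inr (Or.inr (Or.inr (Or.inr (rfl)))))
    · exact Or.inr (Or.inr (Or.inr (Or.inr (Or.inr (line_eq_of_mem hBD hBE (left_mem_affineSpan_pair ℝ B D) hEL6)))))
    · exact Or.inr (Or.inr (Or.inr (Or.inr (Or.inl (line_eq_of_mem hAC (Ne.symm hAC) (right_mem_affineSpan_pair ℝ A C) (left_mem_affineSpan_pair ℝ A C))))))
    · exact Or.inr (Or.inl (line_eq_of_mem hBC (Ne.symm hBC) (right_mem_affineSpan_pair ℝ B C) (left_mem_affineSpan_pair ℝ B C)))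
    · exact absurd (h1.trans h2.symm) hab
    · exact Or.inr (Or.inr (Or.inl (rfl)))
    · exact Or.inr (Or.inr (Or.inr (Or.inr (Or.inl (line_eq_of_mem hAC hCE (right_mem_affineSpan_pair ℝ A C) hEL5)))))
    · exact Or.inr (Or.inr (Or.inr (Or.inl (rfl))))
    · exact Or.inr (Or.inr (Or.inr (Or.inr (Or.inr (line_eq_of_mem hBD (Ne.symm hBD) (right_mem_affineSpan_pair ℝ B D) (left_mem_affineSpan_pair ℝ B D))))))
    · exact Or.inr (Or.inr (Or.inl (line_eq_of_mem hCD (Ne.symm hCD) (right_mem_affineSpan_pair ℝ C D) (left_mem_affineSpan_pair ℝ C D))))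
    · exact absurd (h1.trans h2.symm) hab
    · exact Or.inr (Or.inr (Or.inr (Or.inr (Or.inr (line_eq_of_mem hBD hDE (right_mem_affineSpan_pair ℝ B D) hEL6)))))
    · exact Or.inr (Or.inr (Or.inr (Or.inr (Or.inl (line_eq_of_mem hAC (Ne.symm hAE) hEL5 (left_mem_affineSpan_pair ℝ A C))))))
    · exact Or.inr (Or.inr (Or.inr (Or.inr (Or.inr (line_eq_of_mem hBD (Ne.symm hBE) hEL6 (left_mem_affineSpan_pair ℝ B D))))))
    · exact Or.inr (Or.inr (Or.inr (Or.inr (Or.inl (line_eq_of_mem hAC (Ne.symm hCE) hEL5 (right_mem_affineSpan_pair ℝ A C))))))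
    · exact Or.inr (Or.inr (Or.inr (Or.inr (Or.inr (line_eq_of_mem hBD (Ne.symm hDE) hEL6 (right_mem_affineSpan_pair ℝ B D))))))
    · exact absurd (h1.trans h2.symm) hab
  apply Set.Subset.antisymm
  · rintro x ⟨a, ha, b, hb, c, hc, d, hd, hab, hcd, hne, hx1, hx2⟩
    rcases lineclass a b ha hb hab with h1 | h1 | h1 | h1 | h1 | h1 <;>
      rcases lineclass c d hc hd hcd with h2 | h2 | h2 | h2 | h2 | h2 <;>
      rw [h1] at hx1 <;> rw [h2] at hx2 <;> rw [h1, h2] at hne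
    · exact absurd rfl hne
    · rw [eq_of_mem_two_lines hAB hBC hne hx1 hx2 (right_mem_affineSpan_pair ℝ A B) (left_mem_affineSpan_pair ℝ B C)]
      simp
    · exact (par13 x hx1 hx2).elim
    · rw [eq_of_mem_two_lines hAB hDA hne hx1 hx2 (left_mem_affineSpan_pair ℝ A B) (right_mem_affineSpan_pair ℝ D A)]
      simp
    · rw [eq_of_mem_two_lines hAB hAC hne hx1 hx2 (left_mem_affineSpan_pair ℝ A B) (left_mem_affineSpan_pair ℝ A C)]
      simp
    · rw [eq_of_mem_two_lines hAB hBD hne hx1 hx2 (right_mem_affineSpan_pair ℝ A B) (left_mem_affineSpan_pair ℝ B D)]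
      simp
    · rw [eq_of_mem_two_lines hBC hAB hne hx1 hx2 (left_mem_affineSpan_pair ℝ B C) (right_mem_affineSpan_pair ℝ A B)]
      simp
    · exact absurd rfl hne
    · rw [eq_of_mem_two_lines hBC hCD hne hx1 hx2 (right_mem_affineSpan_pair ℝ B C) (left_mem_affineSpan_pair ℝ C D)]
      simp
    · exact (par24 x hx1 hx2).elim
    · rw [eq_of_mem_two_lines hBC hAC hne hx1 hx2 (right_mem_affineSpan_pair ℝ B C) (right_mem_affineSpan_pair ℝ A C)]
      simp
    · rw [eq_of_mem_two_lines hBC hBD hne hx1 hx2 (left_mem_affineSpan_pair ℝ B C) (left_mem_affineSpan_pair ℝ B D)]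
      simp
    · exact (par13 x hx2 hx1).elim
    · rw [eq_of_mem_two_lines hCD hBC hne hx1 hx2 (left_mem_affineSpan_pair ℝ C D) (right_mem_affineSpan_pair ℝ B C)]
      simp
    · exact absurd rfl hne
    · rw [eq_of_mem_two_lines hCD hDA hne hx1 hx2 (right_mem_affineSpan_pair ℝ C D) (left_mem_affineSpan_pair ℝ D A)]
      simp
    · rw [eq_of_mem_two_lines hCD hAC hne hx1 hx2 (left_mem_affineSpan_pair ℝ C D) (right_mem_affineSpan_pair ℝ A C)]
      simp
    · rw [eq_of_mem_two_lines hCD hBD hne hx1 hx2 (right_mem_affineSpan_pair ℝ C D) (right_mem_affineSpan_pair ℝ B D)]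
      simp
    · rw [eq_of_mem_two_lines hDA hAB hne hx1 hx2 (right_mem_affineSpan_pair ℝ D A) (left_mem_affineSpan_pair ℝ A B)]
      simp
    · exact (par24 x hx2 hx1).elim
    · rw [eq_of_mem_two_lines hDA hCD hne hx1 hx2 (left_mem_affineSpan_pair ℝ D A) (right_mem_affineSpan_pair ℝ C D)]
      simp
    · exact absurd rfl hne
    · rw [eq_of_mem_two_lines hDA hAC hne hx1 hx2 (right_mem_affineSpan_pair ℝ D A) (left_mem_affineSpan_pair ℝ A C)]
      simp
    · rw [eq_of_mem_two_lines hDA hBD hne hx1 hx2 (left_mem_affineSpan_pair ℝ D A) (right_mem_affineSpan_pair ℝ B D)]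
      simp
    · rw [eq_of_mem_two_lines hAC hAB hne hx1 hx2 (left_mem_affineSpan_pair ℝ A C) (left_mem_affineSpan_pair ℝ A B)]
      simp
    · rw [eq_of_mem_two_lines hAC hBC hne hx1 hx2 (right_mem_affineSpan_pair ℝ A C) (right_mem_affineSpan_pair ℝ B C)]
      simp
    · rw [eq_of_mem_two_lines hAC hCD hne hx1 hx2 (right_mem_affineSpan_pair ℝ A C) (left_mem_affineSpan_pair ℝ C D)]
      simp
    · rw [eq_of_mem_two_lines hAC hDA hne hx1 hx2 (left_mem_affineSpan_pair ℝ A C) (right_mem_affineSpan_pair ℝ D A)]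
      simp
    · exact absurd rfl hne
    · rw [eq_of_mem_two_lines hAC hBD hne hx1 hx2 hEL5 hEL6]
      simp
    · rw [eq_of_mem_two_lines hBD hAB hne hx1 hx2 (left_mem_affineSpan_pair ℝ B D) (right_mem_affineSpan_pair ℝ A B)]
      simp
    · rw [eq_of_mem_two_lines hBD hBC hne hx1 hx2 (left_mem_affineSpan_pair ℝ B D) (left_mem_affineSpan_pair ℝ B C)]
      simp
    · rw [eq_of_mem_two_lines hBD hCD hne hx1 hx2 (right_mem_affineSpan_pair ℝ B D) (right_mem_affineSpan_pair ℝ C D)]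
      simp
    · rw [eq_of_mem_two_lines hBD hDA hne hx1 hx2 (right_mem_affineSpan_pair ℝ B D) (left_mem_affineSpan_pair ℝ D A)]
      simp
    · rw [eq_of_mem_two_lines hBD hAC hne hx1 hx2 hEL6 hEL5]
      simp
    · exact absurd rfl hne
  · intro x hx
    simp only [Set.mem_insert_iff, Set.mem_singleton_iff, ← hE] at hx
    rcases hx with rfl | rfl | rfl | rfl | rfl
    · exact mem_interT hAY hBY hAY hDY hAB hAD
        (line_ne_right (by rw [hADB]; exact neg_ne_zero.2 (ne_of_gt hd4)))
        (det3_aba x B) (det3_aba x D)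
    · exact mem_interT hAY hBY hBY hCY hAB hBC
        (line_ne_left (by rw [hBCA]; exact ne_of_gt hd1))
        (det3_abb A x) (det3_aba x C)
    · exact mem_interT hBY hCY hCY hDY hBC hCD
        (line_ne_left (by rw [hCDB]; exact ne_of_gt hd2))
        (det3_abb B x) (det3_aba x D)
    · exact mem_interT hCY hDY hDY hAY hCD hDA
        (line_ne_left (by rw [hDAC]; exact ne_of_gt hd3))
        (det3_abb C x) (det3_aba x A)
    · exact mem_interT hAY hCY hBY hDY hAC hBD
        (line_ne_left' (by rw [hACB]; exact neg_ne_zero.2 (ne_of_gt hd1)))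
        dACE dBDE


lemma pgram_main {S : Set (ℝ × ℝ)} {A B C D : ℝ × ℝ}
    (hA : A ∈ S) (hB : B ∈ S) (hC : C ∈ S) (hD : D ∈ S)
    (hcvx : Cvx A B C D) (hpar : B - A = C - D) :
    IntConf S ∨ IntConf (interT S) ∨ interT (interT S) = interT S := by
  by_cases hex : ∃ w ∈ S, w ∉ ({A, B, C, D, A + (2⁻¹:ℝ) • (C - A)} : Set (ℝ × ℝ))
  · obtain ⟨w, hwS, hwn⟩ := hex
    simp only [Set.mem_insert_iff, Set.mem_singleton_iff, not_or] at hwn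
    obtain ⟨hwA, hwB, hwC, hwD, hwE⟩ := hwn
    obtain ⟨hd1, hd2, hd3, hd4⟩ := hcvx
    have hcvx' : Cvx A B C D := ⟨hd1, hd2, hd3, hd4⟩
    have hδ : 0 < det3 A B D := by
      have h := det3_cyc D A B
      linarith
    have hC' : C = B + D - A := eq_sub_of_add_eq (sub_eq_sub_iff_add_eq_add.mp hpar).symm
    obtain ⟨s, hs⟩ : ∃ s : ℝ, s = det3 A w D / det3 A B D := ⟨_, rfl⟩
    obtain ⟨t, ht⟩ : ∃ t : ℝ, t = det3 A B w / det3 A B D := ⟨_, rfl⟩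
    have cram1 : det3 A w D * (B.1 - A.1) + det3 A B w * (D.1 - A.1)
        = det3 A B D * (w.1 - A.1) := by
      simp only [det3]; ring
    have cram2 : det3 A w D * (B.2 - A.2) + det3 A B w * (D.2 - A.2)
        = det3 A B D * (w.2 - A.2) := by
      simp only [det3]; ring
    have hwrep : w = A + s • (B - A) + t • (D - A) := by
      rw [hs, ht]
      apply Prod.ext
      · simp only [Prod.fst_add, Prod.smul_fst, smul_eq_mul, Prod.fst_sub]
        field_simp
        linear_combination -cram1
      · simp only [Prod.snd_add, Prod.smul_snd, smul_eq_mul, Prod.snd_sub]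
        field_simp
        linear_combination -cram2
    by_cases ht0 : t = 0
    · right; left
      apply pgram_edge hA hB hC hD hwS hcvx' hpar (s := s)
        (by rw [hwrep, ht0]; module)
      · intro h
        exact hwA (by rw [hwrep, h, ht0]; simp)
      · intro h
        exact hwB (by rw [hwrep, h, ht0]; module)
    by_cases ht1 : t = 1
    · right; left
      have hcvx2 : Cvx C D A B := ⟨hd3, hd4, hd1, hd2⟩
      have hpar3 : D - C = A - B := by
        rw [sub_eq_sub_iff_add_eq_add]
        have h := sub_eq_sub_iff_add_eq_add.mp hpar
        rw [add_comm D B, add_comm A C]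
        exact h
      apply pgram_edge hC hD hA hB hwS hcvx2 hpar3 (s := 1 - s)
        (by rw [hwrep, ht1, hC']; module)
      · intro h
        have hs1 : s = 1 := by linarith [sub_eq_zero.mp (by linarith : (1:ℝ) - s - 0 = 0)]
        exact hwC (by rw [hwrep, ht1, hs1, hC']; module)
      · intro h
        have hs0 : s = 0 := by linarith
        exact hwD (by rw [hwrep, ht1, hs0]; module)
    by_cases hs0 : s = 0
    · right; left
      have hcvx3 : Cvx D A B C := ⟨hd4, hd1, hd2, hd3⟩
      have hpar4 : A - D = B - C := by
        rw [sub_eq_sub_iff_add_eq_add]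
        have h := sub_eq_sub_iff_add_eq_add.mp hpar
        rw [add_comm A C]
        exact h.symm
      apply pgram_edge hD hA hB hC hwS hcvx3 hpar4 (s := 1 - t)
        (by rw [hwrep, hs0]; module)
      · intro h
        exact ht1 (by linarith)
      · intro h
        exact ht0 (by linarith)
    by_cases hs1 : s = 1
    · right; left
      have hcvx4 : Cvx B C D A := ⟨hd2, hd3, hd4, hd1⟩
      have hpar5 : C - B = D - A := by rw [hC']; abel
      apply pgram_edge hB hC hD hA hwS hcvx4 hpar5 (s := t)
        (by rw [hwrep, hs1, hC']; module) ht0 ht1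
    by_cases hst : s = t
    · have hdiag := pgram_diag hA hB hC hD hwS hcvx' hpar (s := s)
        (by rw [hwrep, hC', ← hst]; module) hs0 hs1
        (by
          intro h
          exact hwE (by rw [hwrep, hC', ← hst, h]; module))
      rcases hdiag with h | h
      · exact Or.inl h
      · exact Or.inr (Or.inl h)
    · have hgen := pgram_generic hA hB hC hD hwS hcvx' hpar hwrep hs0 hs1 ht0 ht1 hst
      rcases hgen with h | h
      · exact Or.inl h
      · exact Or.inr (Or.inl h)
  · push_neg at hex
    right; right
    have hsub : S ⊆ ({A, B, C, D, A + (2⁻¹:ℝ) • (C - A)} : Set (ℝ × ℝ)) :=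
      fun x hx => hex x hx
    have h5 := interT_five hA hB hC hD hcvx hpar hsub
    have h5' := interT_five (A := A) (B := B) (C := C) (D := D)
      (by simp) (by simp) (by simp) (by simp) hcvx hpar
      (Set.Subset.refl _)
    rw [h5, h5']

lemma cvx_dispatch {S : Set (ℝ × ℝ)} {P Q R T : ℝ × ℝ}
    (hP : P ∈ S) (hQ : Q ∈ S) (hR : R ∈ S) (hT : T ∈ S) (hcvx : Cvx P Q R T) :
    IntConf S ∨ IntConf (interT S) ∨ interT (interT S) = interT S := by
  by_cases h1 : det3 T P Q = det3 R T P
  · by_cases h2 : det3 T P Q = det3 P Q R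
    · have hd : det3 P Q T ≠ 0 := by
        rw [det3_cyc T P Q]
        exact ne_of_gt hcvx.2.2.2
      exact pgram_main hP hQ hR hT hcvx (pgram_of_dets hd h1 h2)
    · right; left
      exact quad_lemma hQ hR hT hP (cvx_cyc hcvx) (fun hh => h2 hh.symm)
  · right; left
    exact quad_lemma hP hQ hR hT hcvx h1

lemma near_pencil {X : Set (ℝ × ℝ)} {p q0 q1 : ℝ × ℝ} (hp : p ∈ X) (hq0 : q0 ∈ X)
    (hq1 : q1 ∈ X) (hq01 : q0 ≠ q1) (hbase : ∀ x ∈ X, x ≠ p → x ∈ line q0 q1)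
    (hpnot : p ∉ line q0 q1) : interT X = X := by
  have hpq0 : p ≠ q0 := fun h => hpnot (by rw [h]; exact left_mem_affineSpan_pair ℝ q0 q1)
  have hpq1 : p ≠ q1 := fun h => hpnot (by rw [h]; exact right_mem_affineSpan_pair ℝ q0 q1)
  have classify : ∀ a b : ℝ × ℝ, a ∈ X → b ∈ X → a ≠ b →
      line a b = line q0 q1 ∨
        (p ∈ line a b ∧ ∃ q, q ∈ X ∧ q ∈ line a b ∧ q ∈ line q0 q1) := by
    intro a b ha hb hab
    by_cases hap : a = p
    · subst hap
      right
      exact ⟨left_mem_affineSpan_pair ℝ a b, b, hb, right_mem_affineSpan_pair ℝ a b,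
        hbase b hb (Ne.symm hab)⟩
    · by_cases hbp : b = p
      · subst hbp
        right
        exact ⟨right_mem_affineSpan_pair ℝ a b, a, ha, left_mem_affineSpan_pair ℝ a b,
          hbase a ha hap⟩
      · left
        exact line_eq_of_mem hq01 hab (hbase a ha hap) (hbase b hb hbp)
  apply Set.Subset.antisymm
  · rintro x ⟨a, ha, b, hb, c, hc, d, hd, hab, hcd, hne, hx1, hx2⟩
    rcases classify a b ha hb hab with h1 | ⟨hp1, q, hqX, hq1', hq2'⟩
    · rcases classify c d hc hd hcd with h2 | ⟨hp2, q', hq'X, hq1'', hq2''⟩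
      · exact absurd (h1.trans h2.symm) hne
      · have hx1' : x ∈ line q0 q1 := by rw [← h1]; exact hx1
        have hne' : line c d ≠ line q0 q1 := fun hh => hne (h1.trans hh.symm)
        have hxq : x = q' := eq_of_mem_two_lines hcd hq01 hne' hx2 hx1' hq1'' hq2''
        rw [hxq]; exact hq'X
    · rcases classify c d hc hd hcd with h2 | ⟨hp2, q', hq'X, hq1'', hq2''⟩
      · have hx2' : x ∈ line q0 q1 := by rw [← h2]; exact hx2
        have hne' : line a b ≠ line q0 q1 := fun hh => hne (hh.trans h2.symm)
        have hxq : x = q := eq_of_mem_two_lines hab hq01 hne' hx1 hx2' hq1' hq2'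
        rw [hxq]; exact hqX
      · have hxp : x = p := eq_of_mem_two_lines hab hcd hne hx1 hx2 hp1 hp2
        rw [hxp]; exact hp
  · intro x hx
    by_cases hxp : x = p
    · subst hxp
      refine ⟨x, hp, q0, hq0, x, hp, q1, hq1, hpq0, hpq1, ?_,
        left_mem_affineSpan_pair ℝ x q0, left_mem_affineSpan_pair ℝ x q1⟩
      intro h
      have hq1mem : q1 ∈ line x q0 := by
        rw [h]; exact right_mem_affineSpan_pair ℝ x q1
      have heq : line q0 q1 = line x q0 :=
        line_eq_of_mem hpq0 hq01 (right_mem_affineSpan_pair ℝ x q0) hq1mem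
      exact hpnot (by rw [heq]; exact left_mem_affineSpan_pair ℝ x q0)
    · refine ⟨q0, hq0, q1, hq1, p, hp, x, hx, hq01, fun h => hxp h.symm, ?_,
        hbase x hx hxp, right_mem_affineSpan_pair ℝ p x⟩
      intro h
      exact hpnot (by rw [h]; exact left_mem_affineSpan_pair ℝ p x)

lemma interT_of_collinear {S : Set (ℝ × ℝ)} (h : Collinear ℝ S) : interT S = ∅ := by
  ext x
  simp only [Set.mem_empty_iff_false, iff_false]
  rintro ⟨a, ha, b, hb, c, hc, d, hd, hab, hcd, hne, _, _⟩
  apply hne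
  have hc' : c ∈ line a b := h.mem_affineSpan_of_mem_of_ne ha hb hc hab
  have hd' : d ∈ line a b := h.mem_affineSpan_of_mem_of_ne ha hb hd hab
  exact (line_eq_of_mem hab hcd hc' hd').symm

lemma interT_empty : interT ∅ = ∅ := by
  ext x
  simp [interT]

lemma det3_transfer {x y z : ℝ × ℝ} (hxy : x ≠ y) (hz : det3 x y z = 0) (hzx : z ≠ x)
    {w : ℝ × ℝ} (hw : det3 x y w ≠ 0) : det3 x z w ≠ 0 := by
  obtain ⟨lam, hlam⟩ := mem_line_iff.1 (mem_of_det3 hxy hz)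
  have h1 : z.1 - x.1 = lam * (y.1 - x.1) := by
    have := congrArg Prod.fst hlam; simpa using this
  have h2 : z.2 - x.2 = lam * (y.2 - x.2) := by
    have := congrArg Prod.snd hlam; simpa using this
  have hlam0 : lam ≠ 0 := by
    intro h0
    rw [h0, zero_smul, sub_eq_zero] at hlam
    exact hzx hlam
  have key : det3 x z w = lam * det3 x y w := by
    simp only [det3]
    linear_combination (w.2 - x.2) * h1 - (w.1 - x.1) * h2
  rw [key]
  exact mul_ne_zero hlam0 hw

lemma np_aux {S : Set (ℝ × ℝ)} {a b c d : ℝ × ℝ} (haS : a ∈ S) (hbS : b ∈ S)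
    (hcS : c ∈ S) (hdS : d ∈ S) (hnp : ∀ p ∈ S, ¬ Collinear ℝ (S \ {p}))
    (habc : det3 a b c ≠ 0) (hd1 : det3 a b d ≠ 0) (hd2 : det3 b c d = 0)
    (hdc : d ≠ c)
    (hS3 : ∀ x ∈ S, det3 a b x = 0 ∨ det3 b c x = 0 ∨ det3 c a x = 0) :
    ∃ A ∈ S, ∃ B ∈ S, ∃ C ∈ S, ∃ D ∈ S,
      det3 A B C ≠ 0 ∧ det3 A B D ≠ 0 ∧ det3 B C D ≠ 0 ∧ det3 C A D ≠ 0 := by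
  have hab : a ≠ b := ne12_of_det3 habc
  have hbc : b ≠ c := ne23_of_det3 habc
  have hdb : d ≠ b := by
    rintro rfl
    exact hd1 (det3_abb a d)
  have hcab : det3 c a b ≠ 0 := by
    rw [det3_cyc b c a, det3_cyc a b c]
    exact habc
  have hcbd : det3 c b d = 0 := by
    rw [det3_swap12 b c d, hd2, neg_zero]
  have hcad : det3 c a d ≠ 0 := by
    intro h0
    exact hdc (eq_of_det3 h0 hcbd hcab)
  have hadc : det3 a d c ≠ 0 := by
    rw [det3_cyc c a d]
    exact hcad
  -- find e off line bc, e ≠ a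
  obtain ⟨e, heS, hea, hbce⟩ : ∃ e ∈ S, e ≠ a ∧ det3 b c e ≠ 0 := by
    by_contra hcon
    push_neg at hcon
    apply hnp a haS
    apply Collinear.subset _ (collinear_line b c)
    intro x hx
    obtain ⟨hxS, hxa⟩ := hx
    exact mem_of_det3 hbc (hcon x hxS (by simpa using hxa))
  rcases hS3 e heS with h1 | h2 | h3
  · -- e on line ab : quartet (a, c, d, e)
    have heb : e ≠ b := by
      intro h
      rw [h] at hbce
      exact hbce (det3_aba b c)
    have hacd : det3 a c d ≠ 0 := by
      rw [det3_swap12 c a d]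
      exact neg_ne_zero.2 hcad
    have hacb : det3 a c b ≠ 0 := by
      rw [det3_swap a b c]
      exact neg_ne_zero.2 habc
    have hace : det3 a c e ≠ 0 := by
      intro h0
      exact hea (eq_of_det3 h0 h1 hacb)
    have hcbe : det3 c b e ≠ 0 := by
      rw [det3_swap12 b c e]
      exact neg_ne_zero.2 hbce
    have hcb : c ≠ b := hbc.symm
    have hcde : det3 c d e ≠ 0 := det3_transfer hcb hcbd hdc hcbe
    have hadb : det3 a d b ≠ 0 := by
      rw [det3_swap a b d]
      exact neg_ne_zero.2 hd1
    have hade : det3 a d e ≠ 0 := by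
      intro h0
      exact hea (eq_of_det3 h0 h1 hadb)
    have hdae : det3 d a e ≠ 0 := by
      rw [det3_swap12 a d e]
      exact neg_ne_zero.2 hade
    exact ⟨a, haS, c, hcS, d, hdS, e, heS, hacd, hace, hcde, hdae⟩
  · exact absurd h2 hbce
  · -- e on line ca : quartet (a, b, d, e)
    have hace0 : det3 a c e = 0 := by
      rw [det3_swap12 c a e, h3, neg_zero]
    have habe : det3 a b e ≠ 0 := by
      intro h0
      exact hea (eq_of_det3 h0 hace0 habc)
    have hbde : det3 b d e ≠ 0 := det3_transfer hbc hd2 hdb hbce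
    have hade : det3 a d e ≠ 0 := by
      intro h0
      exact hea (eq_of_det3 h0 hace0 hadc)
    have hdae : det3 d a e ≠ 0 := by
      rw [det3_swap12 a d e]
      exact neg_ne_zero.2 hade
    exact ⟨a, haS, b, hbS, d, hdS, e, heS, hd1, habe, hbde, hdae⟩

lemma np_lemma {S : Set (ℝ × ℝ)} (hncol : ¬ Collinear ℝ S)
    (hnp : ∀ p ∈ S, ¬ Collinear ℝ (S \ {p})) :
    ∃ A ∈ S, ∃ B ∈ S, ∃ C ∈ S, ∃ D ∈ S,
      det3 A B C ≠ 0 ∧ det3 A B D ≠ 0 ∧ det3 B C D ≠ 0 ∧ det3 C A D ≠ 0 := by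
  obtain ⟨a, haS, b, hbS, c, hcS, habc⟩ := exists_triple_of_not_collinear hncol
  have hab : a ≠ b := ne12_of_det3 habc
  by_cases h3 : ∀ x ∈ S, det3 a b x = 0 ∨ det3 b c x = 0 ∨ det3 c a x = 0
  · obtain ⟨d, hdS, hdc, habd⟩ : ∃ d ∈ S, d ≠ c ∧ det3 a b d ≠ 0 := by
      by_contra hcon
      push_neg at hcon
      apply hnp c hcS
      apply Collinear.subset _ (collinear_line a b)
      intro x hx
      obtain ⟨hxS, hxc⟩ := hx
      exact mem_of_det3 hab (hcon x hxS (by simpa using hxc))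
    rcases h3 d hdS with h | h | h
    · exact absurd h habd
    · exact np_aux haS hbS hcS hdS hnp habc habd h hdc h3
    · have h3' : ∀ x ∈ S, det3 b a x = 0 ∨ det3 a c x = 0 ∨ det3 c b x = 0 := by
        intro x hxS
        rcases h3 x hxS with h' | h' | h'
        · exact Or.inl (by rw [det3_swap12 a b x, h', neg_zero])
        · exact Or.inr (Or.inr (by rw [det3_swap12 b c x, h', neg_zero]))
        · exact Or.inr (Or.inl (by rw [det3_swap12 c a x, h', neg_zero]))
      have hbac : det3 b a c ≠ 0 := by
        rw [det3_swap12 a b c]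
        exact neg_ne_zero.2 habc
      have hbad : det3 b a d ≠ 0 := by
        rw [det3_swap12 a b d]
        exact neg_ne_zero.2 habd
      have hacd : det3 a c d = 0 := by
        rw [det3_swap12 c a d, h, neg_zero]
      exact np_aux hbS haS hcS hdS hnp hbac hbad hacd hdc h3'
  · push_neg at h3
    obtain ⟨d, hdS, h1', h2', h3'⟩ := h3
    exact ⟨a, haS, b, hbS, c, hcS, d, hdS, habc, h1', h2', h3'⟩

end TrianglePf

open TrianglePf in
/-- If a finite set `S ⊆ ℝ²` has infinite order under `T`, then some iterate `Tⁿ(S)`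
contains three noncollinear points `A, B, C` and a fourth point `P` strictly inside
the triangle they determine. -/
theorem exists_point_in_triangle_interior (S : Set (ℝ × ℝ)) (hS : S.Finite)
    (hinf : ∀ n : ℕ, interT^[n + 1] S ≠ interT^[n] S) :
    ∃ (n : ℕ) (A B C P : ℝ × ℝ),
      A ∈ interT^[n] S ∧ B ∈ interT^[n] S ∧ C ∈ interT^[n] S ∧ P ∈ interT^[n] S ∧
      ¬ Collinear ℝ ({A, B, C} : Set (ℝ × ℝ)) ∧
      P ∈ interior (convexHull ℝ ({A, B, C} : Set (ℝ × ℝ))) := by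
  by_cases hcol : Collinear ℝ S
  · exfalso
    apply hinf 1
    have e1 : interT^[1] S = ∅ := by
      rw [Function.iterate_one]
      exact interT_of_collinear hcol
    have e2 : interT^[1+1] S = ∅ := by
      rw [Function.iterate_succ_apply', e1, interT_empty]
    rw [e2, e1]
  by_cases hnp : ∃ p ∈ S, Collinear ℝ (S \ {p})
  · exfalso
    obtain ⟨p, hpS, hM⟩ := hnp
    obtain ⟨q0, hq0, q1, hq1, hq01⟩ : ∃ q0 ∈ S \ {p}, ∃ q1 ∈ S \ {p}, q0 ≠ q1 := by
      by_contra hcon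
      push_neg at hcon
      apply hcol
      rcases Set.eq_empty_or_nonempty (S \ {p}) with he | ⟨x, hx⟩
      · apply Collinear.subset _ (collinear_singleton ℝ p)
        intro y hy
        by_cases hyp : y = p
        · simp [hyp]
        · have hy' : y ∈ S \ {p} := ⟨hy, by simpa using hyp⟩
          rw [he] at hy'
          exact hy'.elim
      · apply Collinear.subset _ (collinear_pair ℝ p x)
        intro y hy
        by_cases hyp : y = p
        · simp [hyp]
        · have hy' : y ∈ S \ {p} := ⟨hy, by simpa using hyp⟩
          have hyx := hcon y hy' x hx
          simp [hyx]
    have hbase : ∀ x ∈ S, x ≠ p → x ∈ line q0 q1 := fun x hx hxp =>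
      hM.mem_affineSpan_of_mem_of_ne hq0 hq1 ⟨hx, by simpa using hxp⟩ hq01
    have hpnot : p ∉ line q0 q1 := by
      intro hmem
      apply hcol
      apply Collinear.subset _ (collinear_line q0 q1)
      intro x hx
      by_cases hxp : x = p
      · rwa [hxp]
      · exact hbase x hx hxp
    apply hinf 0
    have hTS := near_pencil hpS hq0.1 hq1.1 hq01 hbase hpnot
    rw [zero_add, Function.iterate_one, Function.iterate_zero_apply]
    exact hTS
  · push_neg at hnp
    obtain ⟨A, hAS, B, hBS, C, hCS, D, hDS, n0, n1, n2, n3⟩ := np_lemma hcol hnp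
    have key : IntConf S ∨ IntConf (interT S) ∨ interT (interT S) = interT S := by
      rcases four_point hAS hBS hCS hDS n0 n1 n2 n3 with h | h | h | h | h | h | h
      · exact Or.inl h
      · exact cvx_dispatch hAS hBS hCS hDS h
      · exact cvx_dispatch hAS hDS hBS hCS h
      · exact cvx_dispatch hAS hBS hDS hCS h
      · exact cvx_dispatch hBS hAS hCS hDS h
      · exact cvx_dispatch hBS hDS hAS hCS h
      · exact cvx_dispatch hBS hAS hDS hCS h
    rcases key with h | h | heq
    · obtain ⟨P, Q, R, E, h1, h2, h3, h4, h5, h6⟩ := h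
      exact ⟨0, P, Q, R, E, by simpa using h1, by simpa using h2, by simpa using h3,
        by simpa using h4, h5, h6⟩
    · obtain ⟨P, Q, R, E, h1, h2, h3, h4, h5, h6⟩ := h
      refine ⟨1, P, Q, R, E, ?_, ?_, ?_, ?_, h5, h6⟩ <;>
        · rw [Function.iterate_one]
          assumption
    · exfalso
      apply hinf 1
      rw [Function.iterate_succ_apply', Function.iterate_one]
      exact heq
end
end

section
/- Let A, B, C be noncollinear points in ℝ² and let K be a set of points that is dense in the triangle with vertices A, B, C (the convex hull of {A, B, C}). Then T(K) is dense in ℝ². -/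
open Set Filter

noncomputable section

open Topology

/-!
The closure of `K` contains a nonempty open set `U`, the interior of the triangle. Through any
point `x` there are two non-parallel lines each meeting `U` in two points, `a, b` and `c, d`. The
intersection point of the lines `a b` and `c d` is a continuous function of `(a, b, c, d)` as long as
the lines stay non-parallel, so replacing the four points by nearby points of `K` produces points of
`T(K)` arbitrarily close to `x`.
-/

def cross (u v : ℝ × ℝ) : ℝ := u.1 * v.2 - u.2 * v.1

/-- The intersection point of the lines `a b` and `c d`, by Cramer's rule. If the lines are parallel,
the denominator vanishes and the value is the junk `a`. -/
def lineInter (a b c d : ℝ × ℝ) : ℝ × ℝ :=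
  a + (cross (c - a) (d - c) / cross (b - a) (d - c)) • (b - a)

lemma mem_line_iff {a b p : ℝ × ℝ} : p ∈ line a b ↔ ∃ s : ℝ, a + s • (b - a) = p := by
  simp only [line, mem_affineSpan_pair_iff_exists_lineMap_eq, AffineMap.lineMap_apply_module',
    add_comm]

lemma cross_sub_left_eq_zero_of_mem_line {a b p : ℝ × ℝ} (hp : p ∈ line a b) :
    cross (b - a) (p - a) = 0 := by
  obtain ⟨s, rfl⟩ := mem_line_iff.mp hp
  simp only [cross, add_sub_cancel_left, Prod.smul_fst, Prod.smul_snd, smul_eq_mul]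
  ring

lemma line_ne_of_cross_ne_zero {a b c d : ℝ × ℝ} (h : cross (b - a) (d - c) ≠ 0) :
    line a b ≠ line c d := by
  intro hl
  have hc : c ∈ line a b := hl ▸ left_mem_affineSpan_pair ℝ c d
  have hd : d ∈ line a b := hl ▸ right_mem_affineSpan_pair ℝ c d
  replace hc := cross_sub_left_eq_zero_of_mem_line hc
  replace hd := cross_sub_left_eq_zero_of_mem_line hd
  apply h
  simp only [cross, Prod.fst_sub, Prod.snd_sub] at hc hd ⊢
  linear_combination hd - hc

lemma lineInter_mem_left (a b c d : ℝ × ℝ) : lineInter a b c d ∈ line a b :=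
  mem_line_iff.mpr ⟨_, rfl⟩

lemma lineInter_mem_right {a b c d : ℝ × ℝ} (h : cross (b - a) (d - c) ≠ 0) :
    lineInter a b c d ∈ line c d := by
  refine mem_line_iff.mpr ⟨cross (c - a) (b - a) / cross (b - a) (d - c), ?_⟩
  simp only [lineInter, cross, Prod.fst_sub, Prod.snd_sub] at h ⊢
  ext <;> simp only [Prod.fst_add, Prod.snd_add, Prod.smul_fst, Prod.smul_snd, Prod.fst_sub,
    Prod.snd_sub, smul_eq_mul] <;> field_simp <;> ring

lemma lineInter_eq {a b c d x : ℝ × ℝ} {s t : ℝ} (h : cross (b - a) (d - c) ≠ 0)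
    (hs : a + s • (b - a) = x) (ht : c + t • (d - c) = x) : lineInter a b c d = x := by
  have hst := congrArg Prod.fst (hs.trans ht.symm)
  have hst' := congrArg Prod.snd (hs.trans ht.symm)
  have key : cross (c - a) (d - c) = s * cross (b - a) (d - c) := by
    simp only [Prod.fst_add, Prod.snd_add, Prod.smul_fst, Prod.smul_snd, Prod.fst_sub,
      Prod.snd_sub, smul_eq_mul] at hst hst'
    simp only [cross, Prod.fst_sub, Prod.snd_sub]
    linear_combination (d.1 - c.1) * hst' - (d.2 - c.2) * hst
  rw [lineInter, key, mul_div_cancel_right₀ _ h, hs]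

lemma lineInter_mem_interT {S : Set (ℝ × ℝ)} {a b c d : ℝ × ℝ} (ha : a ∈ S) (hb : b ∈ S)
    (hc : c ∈ S) (hd : d ∈ S) (h : cross (b - a) (d - c) ≠ 0) : lineInter a b c d ∈ interT S := by
  have hab : a ≠ b := by rintro rfl; simp [cross] at h
  have hcd : c ≠ d := by rintro rfl; simp [cross] at h
  exact ⟨a, ha, b, hb, c, hc, d, hd, hab, hcd, line_ne_of_cross_ne_zero h,
    lineInter_mem_left a b c d, lineInter_mem_right h⟩

lemma continuousAt_lineInter {a b c d : ℝ × ℝ} (h : cross (b - a) (d - c) ≠ 0) :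
    ContinuousAt (fun z : (ℝ × ℝ) × (ℝ × ℝ) × (ℝ × ℝ) × (ℝ × ℝ) =>
      lineInter z.1 z.2.1 z.2.2.1 z.2.2.2) (a, b, c, d) := by
  unfold lineInter cross at *
  fun_prop (disch := exact h)

lemma lineInter_mem_closure_interT {K : Set (ℝ × ℝ)} {a b c d : ℝ × ℝ} (ha : a ∈ closure K)
    (hb : b ∈ closure K) (hc : c ∈ closure K) (hd : d ∈ closure K)
    (h : cross (b - a) (d - c) ≠ 0) : lineInter a b c d ∈ closure (interT K) := by
  set O : Set ((ℝ × ℝ) × (ℝ × ℝ) × (ℝ × ℝ) × (ℝ × ℝ)) :=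
    {z | cross (z.2.1 - z.1) (z.2.2.2 - z.2.2.1) ≠ 0}
  have hO : IsOpen O := isOpen_ne_fun (by unfold cross; fun_prop) continuous_const
  have hz : (a, b, c, d) ∈ closure (O ∩ K ×ˢ K ×ˢ K ×ˢ K) :=
    hO.inter_closure ⟨h, by simpa only [closure_prod_eq] using ⟨ha, hb, hc, hd⟩⟩
  refine closure_mono ?_ ((continuousAt_lineInter h).continuousWithinAt.mem_closure_image hz)
  rintro _ ⟨z, ⟨hzO, hz₁, hz₂, hz₃, hz₄⟩, rfl⟩
  exact lineInter_mem_interT hz₁ hz₂ hz₃ hz₄ hzO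

lemma affineSpan_eq_top_of_not_collinear {k V P : Type*} [Field k] [AddCommGroup V] [Module k V]
    [AddTorsor V P] [FiniteDimensional k V] (hV : Module.finrank k V = 2) {s : Set P}
    (h : ¬ Collinear k s) : affineSpan k s = ⊤ := by
  have hs : s.Nonempty := nonempty_iff_ne_empty.2 fun hs ↦ h (hs ▸ collinear_empty k P)
  rw [AffineSubspace.affineSpan_eq_top_iff_vectorSpan_eq_top_of_nonempty k V P hs]
  by_contra hne
  have := Submodule.finrank_lt hne
  exact h (collinear_iff_finrank_le_one.mpr (by omega))

lemma exists_pos_add_smul_mem {E : Type*} [AddCommGroup E] [Module ℝ E] [TopologicalSpace E]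
    [IsTopologicalAddGroup E] [ContinuousSMul ℝ E] {U : Set E} (hU : IsOpen U) {u : E}
    (hu : u ∈ U) (w : E) : ∃ t : ℝ, 0 < t ∧ u + t • w ∈ U := by
  have hcont : Continuous fun t : ℝ => u + t • w := by fun_prop
  have hmem : ∀ᶠ t in 𝓝[>] (0 : ℝ), u + t • w ∈ U :=
    nhdsWithin_le_nhds (hcont.continuousAt.preimage_mem_nhds (by simpa using hU.mem_nhds hu))
  obtain ⟨t, htU, ht⟩ := (hmem.and self_mem_nhdsWithin).exists
  exact ⟨t, ht, htU⟩

lemma cross_self_rotate_ne_zero {y : ℝ × ℝ} (hy : y ≠ 0) : cross y (-y.2, y.1) ≠ 0 := by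
  simp only [cross, mul_neg, sub_neg_eq_add, ne_eq, mul_self_add_mul_self_eq_zero]
  exact fun h => hy (Prod.ext h.1 h.2)

lemma exists_lineInter_eq {U : Set (ℝ × ℝ)} (hU : IsOpen U) (hne : U.Nonempty) (x : ℝ × ℝ) :
    ∃ a ∈ U, ∃ b ∈ U, ∃ c ∈ U, ∃ d ∈ U, cross (b - a) (d - c) ≠ 0 ∧ lineInter a b c d = x := by
  obtain ⟨a, hax, ha⟩ := (dense_compl_singleton x).exists_mem_open hU hne
  have hy : x - a ≠ 0 := sub_ne_zero.2 (Ne.symm hax)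
  obtain ⟨δ, hδ, hc⟩ := exists_pos_add_smul_mem hU ha (-(x - a).2, (x - a).1)
  set c := a + δ • (-(x - a).2, (x - a).1)
  -- `c - a` is perpendicular to `x - a`, so `x`, `a`, `c` are not collinear.
  have hxac : cross (x - a) (x - c) ≠ 0 := by
    have : cross (x - a) (x - c) = -δ * cross (x - a) (-(x - a).2, (x - a).1) := by
      simp only [c, cross, Prod.fst_sub, Prod.snd_sub, Prod.fst_add, Prod.snd_add, Prod.smul_fst,
        Prod.smul_snd, smul_eq_mul]
      ring
    rw [this]
    exact mul_ne_zero (neg_ne_zero.2 hδ.ne') (cross_self_rotate_ne_zero hy)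
  obtain ⟨σ, hσ, hb⟩ := exists_pos_add_smul_mem hU ha (x - a)
  obtain ⟨τ, hτ, hd⟩ := exists_pos_add_smul_mem hU hc (x - c)
  have hbd : cross (a + σ • (x - a) - a) (c + τ • (x - c) - c) ≠ 0 := by
    have : cross (σ • (x - a)) (τ • (x - c)) = σ * τ * cross (x - a) (x - c) := by
      simp only [cross, Prod.smul_fst, Prod.smul_snd, smul_eq_mul]
      ring
    rw [add_sub_cancel_left, add_sub_cancel_left, this]
    exact mul_ne_zero (mul_ne_zero hσ.ne' hτ.ne') hxac
  refine ⟨a, ha, _, hb, c, hc, _, hd, hbd, lineInter_eq (s := σ⁻¹) (t := τ⁻¹) hbd ?_ ?_⟩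
  · rw [add_sub_cancel_left, inv_smul_smul₀ hσ.ne', add_sub_cancel]
  · rw [add_sub_cancel_left, inv_smul_smul₀ hτ.ne', add_sub_cancel]

theorem dense_interT_of_nonempty_interior_closure {K : Set (ℝ × ℝ)}
    (hK : (interior (closure K)).Nonempty) : Dense (interT K) := by
  intro x
  obtain ⟨a, ha, b, hb, c, hc, d, hd, h, rfl⟩ := exists_lineInter_eq isOpen_interior hK x
  exact lineInter_mem_closure_interT (interior_subset ha) (interior_subset hb)
    (interior_subset hc) (interior_subset hd) h

theorem dense_interT_of_dense_in_triangle_general (A B C : ℝ × ℝ)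
    (hABC : ¬ Collinear ℝ ({A, B, C} : Set (ℝ × ℝ)))
    (K : Set (ℝ × ℝ))
    (hdense : convexHull ℝ ({A, B, C} : Set (ℝ × ℝ)) ⊆ closure K) :
    Dense (interT K) := by
  refine dense_interT_of_nonempty_interior_closure (Nonempty.mono (interior_mono hdense) ?_)
  rw [interior_convexHull_nonempty_iff_affineSpan_eq_top]
  exact affineSpan_eq_top_of_not_collinear (by simp) hABC

/-- If `K` is dense in the triangle with noncollinear vertices `A, B, C`, then
`T(K)` is dense in the whole plane. -/
theorem dense_interT_of_dense_in_triangle (A B C : ℝ × ℝ)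
    (hABC : ¬ Collinear ℝ ({A, B, C} : Set (ℝ × ℝ)))
    (K : Set (ℝ × ℝ)) (hK : K ⊆ convexHull ℝ ({A, B, C} : Set (ℝ × ℝ)))
    (hdense : convexHull ℝ ({A, B, C} : Set (ℝ × ℝ)) ⊆ closure K) :
    Dense (interT K) :=
  dense_interT_of_dense_in_triangle_general A B C hABC K hdense
end
end

section
/- Let A, B, C be noncollinear points in ℝ² and let P be a point in the interior of the convex hull of {A, B, C}. Let D be the intersection point of the lines BP and AC, and let F be the intersection point of the lines CP and AB. Then the area of the triangle with vertices P, D, F is strictly less than the area of the triangle with vertices A, D, F. -/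
/-!
Let `(α, β, γ)` be the barycentric coordinates of `P` with respect to `A, B, C`; they are
positive because `P` is interior. The cevian feet are `D = (α A + γ C) / (α + γ)` and
`F = (α A + β B) / (α + β)`, so `P = -α A + (α + γ) D + (α + β) F`: in the triangle `ADF`
the barycentric coordinate of `P` at the vertex `A` is `-α`. Replacing a vertex `b i` of a
simplex by a point `X` multiplies its volume by `|b.coord i X|`, since the affine map
`x ↦ x + b.coord i x • (X - b i)` does the replacement and its linear part has determinant
`b.coord i X`. Hence `area PDF = α · area ADF < area ADF`.
-/

open Set MeasureTheory

noncomputable section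

open Pointwise

theorem Matrix.range_cons_cons_cons_empty {α : Type*} (x y z : α) (u : Fin 0 → α) :
    range (vecCons x <| vecCons y <| vecCons z u) = {x, y, z} := by
  rw [range_cons, range_cons_cons_empty, singleton_union]

section Volume

variable {E : Type*} [NormedAddCommGroup E] [NormedSpace ℝ E] [MeasurableSpace E]
  (μ : Measure E) [μ.IsAddHaarMeasure]

theorem AffineBasis.addHaar_convexHull_pos {ι : Type*} [Fintype ι] (b : AffineBasis ι ℝ E) :
    0 < μ (convexHull ℝ (range b)) :=
  Measure.measure_pos_of_nonempty_interior μ ⟨_, b.centroid_mem_interior_convexHull⟩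

variable [BorelSpace E] [FiniteDimensional ℝ E]

theorem AffineBasis.addHaar_convexHull_update {ι : Type*} [DecidableEq ι]
    (b : AffineBasis ι ℝ E) (i : ι) (X : E) :
    μ (convexHull ℝ (range (Function.update b i X))) =
      ENNReal.ofReal |b.coord i X| * μ (convexHull ℝ (range b)) := by
  set w := X - b i
  set T := LinearMap.transvection (b.coord i).linear w
  have hcoord (x : E) : b.coord i x = (b.coord i).linear x + b.coord i 0 :=
    congrFun (b.coord i).decomp x
  have hrange : range (Function.update b i X) = b.coord i 0 • w +ᵥ T '' range b := by
    rw [← image_vadd, image_image, ← range_comp]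
    congr 1
    funext j
    have hTj : b.coord i 0 • w +ᵥ T (b j) = b j + b.coord i (b j) • w := by
      rw [hcoord (b j), LinearMap.transvection.apply, vadd_eq_add]; module
    rw [Function.comp_apply, hTj]
    rcases eq_or_ne j i with rfl | hj
    · simp [w]
    · simp [hj, b.coord_apply_ne hj.symm]
  have hdet : LinearMap.det T = b.coord i X := by
    rw [LinearMap.transvection.det, map_sub, hcoord X, ← b.coord_apply_eq i, hcoord (b i)]
    ring
  rw [hrange, convexHull_vadd, ← T.image_convexHull, measure_vadd,
    Measure.addHaar_image_linearMap, hdet]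

end Volume

namespace AffineBasis

variable {k V P : Type*} [AddCommGroup V] [AddTorsor V P]

theorem exists_of_not_collinear [DivisionRing k] [Module k V] [FiniteDimensional k V]
    (hV : Module.finrank k V = 2) {A B C : P} (h : ¬ Collinear k {A, B, C}) :
    ∃ b : AffineBasis (Fin 3) k P, ⇑b = ![A, B, C] := by
  have hind := affineIndependent_iff_not_collinear_set.2 h
  have hspan := hind.affineSpan_eq_top_iff_card_eq_finrank_add_one.2 (by simp [hV])
  exact ⟨⟨_, hind, hspan⟩, rfl⟩

theorem exists_lineMap_eq_of_mem_line_inter [Ring k] [Module k V] {ι : Type*}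
    (b : AffineBasis ι k P) {i j l : ι} (hj : j ≠ i) (hl : l ≠ i) {X Y : P}
    (hY₁ : Y ∈ line[k, b i, X]) (hY₂ : Y ∈ line[k, b j, b l]) :
    ∃ t : k, AffineMap.lineMap (b i) X t = Y ∧ t * (1 - b.coord i X) = 1 := by
  obtain ⟨t, rfl⟩ := mem_affineSpan_pair_iff_exists_lineMap_eq.1 hY₁
  obtain ⟨r, hr⟩ := mem_affineSpan_pair_iff_exists_lineMap_eq.1 hY₂
  refine ⟨t, rfl, ?_⟩
  have hcoord := congrArg (b.coord i) hr
  rw [AffineMap.apply_lineMap, AffineMap.apply_lineMap, b.coord_apply_ne hj.symm,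
    b.coord_apply_ne hl.symm, b.coord_apply_eq, AffineMap.lineMap_apply_ring',
    AffineMap.lineMap_apply_ring'] at hcoord
  simp only [mul_zero, sub_zero, zero_add] at hcoord
  rw [← neg_sub (b.coord i X) 1, mul_neg, neg_eq_iff_eq_neg, eq_neg_iff_add_eq_zero]
  exact hcoord.symm

variable [Field k] [Module k V]

theorem toMatrix_cevians (b : AffineBasis (Fin 3) k P) {X : P} {t s : k}
    (ht : t * (1 - b.coord 1 X) = 1) (hs : s * (1 - b.coord 2 X) = 1) :
    b.toMatrix ![b 0, AffineMap.lineMap (b 1) X t, AffineMap.lineMap (b 2) X s] =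
      !![1, 0, 0;
        t * b.coord 0 X, 0, t * b.coord 2 X;
        s * b.coord 0 X, s * b.coord 1 X, 0] := by
  ext m n
  have hD : t * (b.coord 1 X - 1) + 1 = 0 := by linear_combination -ht
  have hF : s * (b.coord 2 X - 1) + 1 = 0 := by linear_combination -hs
  fin_cases m <;> fin_cases n <;>
    simp [toMatrix_apply, AffineMap.apply_lineMap, AffineMap.lineMap_apply_ring', hD, hF]

theorem exists_affineBasis_cevians (b : AffineBasis (Fin 3) k P)
    {X D F : P} (hX₁ : b.coord 1 X ≠ 0) (hX₂ : b.coord 2 X ≠ 0)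
    (hD₁ : D ∈ line[k, b 1, X]) (hD₂ : D ∈ line[k, b 0, b 2])
    (hF₁ : F ∈ line[k, b 2, X]) (hF₂ : F ∈ line[k, b 0, b 1]) :
    ∃ b' : AffineBasis (Fin 3) k P, ⇑b' = ![b 0, D, F] ∧ b'.coord 0 X = -b.coord 0 X := by
  obtain ⟨t, rfl, ht⟩ :=
    b.exists_lineMap_eq_of_mem_line_inter (by decide) (by decide) hD₁ hD₂
  obtain ⟨s, rfl, hs⟩ :=
    b.exists_lineMap_eq_of_mem_line_inter (by decide) (by decide) hF₁ hF₂
  have hM := b.toMatrix_cevians ht hs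
  have hdet : (b.toMatrix ![b 0, AffineMap.lineMap (b 1) X t,
      AffineMap.lineMap (b 2) X s]).det ≠ 0 := by
    rw [hM, Matrix.det_fin_three]
    simp [left_ne_zero_of_mul_eq_one ht, left_ne_zero_of_mul_eq_one hs, hX₁, hX₂]
  obtain ⟨hind, hspan⟩ :=
    (b.isUnit_toMatrix_iff _).1 ((Matrix.isUnit_iff_isUnit_det _).2 hdet.isUnit)
  let b' : AffineBasis (Fin 3) k P := ⟨_, hind, hspan⟩
  refine ⟨b', rfl, ?_⟩
  have hcoords := b.toMatrix_vecMul_coords b' X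
  rw [show b.toMatrix b' = _ from hM] at hcoords
  have h0 := congrFun hcoords 0
  have h1 := congrFun hcoords 1
  have h2 := congrFun hcoords 2
  simp only [Matrix.vecMul, Matrix.vec3_dotProduct, coords_apply, Matrix.of_apply,
    Matrix.cons_val', Matrix.cons_val_zero, Matrix.cons_val_one, Matrix.cons_val,
    Matrix.cons_val_fin_one, mul_one, mul_zero, add_zero, zero_add] at h0 h1 h2
  have e1 : b'.coord 1 X * t = 1 := mul_right_cancel₀ hX₂ (by linear_combination h2)
  have e2 : b'.coord 2 X * s = 1 := mul_right_cancel₀ hX₁ (by linear_combination h1)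
  linear_combination h0 - b.coord 0 X * e1 - b.coord 0 X * e2

end AffineBasis

/-- Let `P` lie strictly inside the triangle with noncollinear vertices `A, B, C`, let `D`
be the intersection of the lines `BP` and `AC`, and let `F` be the intersection of the lines
`CP` and `AB`.  Then the area of triangle `PDF` is strictly less than that of triangle `ADF`. -/
theorem area_PDF_lt_area_ADF (A B C P D F : ℝ × ℝ)
    (hABC : ¬ Collinear ℝ ({A, B, C} : Set (ℝ × ℝ)))
    (hP : P ∈ interior (convexHull ℝ ({A, B, C} : Set (ℝ × ℝ))))
    (hD₁ : D ∈ line B P) (hD₂ : D ∈ line A C)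
    (hF₁ : F ∈ line C P) (hF₂ : F ∈ line A B) :
    volume (convexHull ℝ ({P, D, F} : Set (ℝ × ℝ))) <
      volume (convexHull ℝ ({A, D, F} : Set (ℝ × ℝ))) := by
  obtain ⟨b, hb⟩ := AffineBasis.exists_of_not_collinear (by simp) hABC
  have hrange : range b = {A, B, C} := by rw [hb]; exact Matrix.range_cons_cons_cons_empty ..
  rw [← hrange, b.interior_convexHull] at hP
  obtain ⟨rfl, rfl, rfl⟩ : b 0 = A ∧ b 1 = B ∧ b 2 = C := by simp [hb]
  have hP₀ : b.coord 0 P < 1 := by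
    have hsum := b.sum_coord_apply_eq_one P
    rw [Fin.sum_univ_three] at hsum
    linarith [hP 1, hP 2]
  obtain ⟨b', hb', hb'P⟩ := b.exists_affineBasis_cevians (hP 1).ne' (hP 2).ne'
    hD₁ hD₂ hF₁ hF₂
  have hPDF : range (Function.update b' 0 P) = {P, D, F} := by
    rw [hb']
    exact (congrArg range (Fin.update_cons_zero ..)).trans (Matrix.range_cons_cons_cons_empty ..)
  have hADF : range b' = {b 0, D, F} := by rw [hb']; exact Matrix.range_cons_cons_cons_empty ..
  rw [← hPDF, ← hADF, b'.addHaar_convexHull_update volume, hb'P, abs_neg, abs_of_pos (hP 0)]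
  have hpos := (b'.addHaar_convexHull_pos volume).ne'
  have hfin : volume (convexHull ℝ (range b')) ≠ ⊤ :=
    ((finite_range b').isCompact_convexHull (𝕜 := ℝ)).measure_ne_top
  simpa only [one_mul] using ENNReal.mul_lt_mul_left hpos hfin (ENNReal.ofReal_lt_one.2 hP₀)
end
end
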